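/- arXiv:1510.01539 — 8 statements merged into one kernel-verified Lean document; each statement's English description precedes it below -/
import Mathlib

section
/- There exists a constant C' ≥ 1, depending only on κ, such that the following holds (long-time regime, Lemma 2.4 (1)(i)). Let d ≥ 1, κ > 1, U > 0, t > 0, x_min ∈ [0, (Ut)^{κ/(κ-1)}], and x ∈ ℝ^d with ‖x‖ ≤ (Ut)^{κ/(κ-1)}. Then every differentiable y : [0,t] → ℝ^d with y(0) = x and ‖y'(s)‖ ≤ U·(x_min + ‖y(s)‖)^{1/κ} for all s ∈ [0,t] satisfies ‖y(s)‖ ≤ C'·(Ut)^{κ/(κ-1)} for all s ∈ [0,t]. -/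
/-!
Let `M` be the maximum of `‖y‖` on `[0, t]` and `R = (U t)^{κ/(κ-1)}`. The mean value inequality
gives `M ≤ ‖x‖ + U t (x_min + M)^{1/κ}`. If `M > R`, then `x_min ≤ M` and `R = U t R^{1/κ} ≤ U t M^{1/κ}`,
so `M ≤ 3 U t M^{1/κ}`; as `1/κ < 1` this forces `M ≤ (3 U t)^{κ/(κ-1)} = 3^{κ/(κ-1)} R`.
-/

open Set

theorem exists_bound_le_norm_zero_add_mul_of_norm_deriv_le {E : Type*} [NormedAddCommGroup E]
    [NormedSpace ℝ E] {y y' : ℝ → E} {φ : ℝ → ℝ} {t : ℝ} (ht : 0 ≤ t)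
    (hφ : MonotoneOn φ (Ici 0)) (hy : ∀ s ∈ Icc 0 t, HasDerivAt y (y' s) s)
    (hy' : ∀ s ∈ Icc 0 t, ‖y' s‖ ≤ φ ‖y s‖) :
    ∃ M, (∀ s ∈ Icc 0 t, ‖y s‖ ≤ M) ∧ M ≤ ‖y 0‖ + t * φ M := by
  obtain ⟨s₀, hs₀, hmax⟩ := isCompact_Icc.exists_isMaxOn (nonempty_Icc.2 ht)
    fun s hs ↦ (hy s hs).continuousAt.continuousWithinAt.norm
  refine ⟨‖y s₀‖, hmax, ?_⟩
  have hy'_le : ∀ s ∈ Icc 0 t, ‖y' s‖ ≤ φ ‖y s₀‖ := fun s hs ↦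
    (hy' s hs).trans (hφ (norm_nonneg _) (norm_nonneg _) (hmax hs))
  have hmvt : ‖y s₀ - y 0‖ ≤ φ ‖y s₀‖ * ‖s₀ - 0‖ :=
    (convex_Icc 0 t).norm_image_sub_le_of_norm_hasDerivWithin_le
      (fun s hs ↦ (hy s hs).hasDerivWithinAt) hy'_le (left_mem_Icc.2 ht) hs₀
  have hs₀t : ‖s₀ - 0‖ ≤ t := by
    rw [sub_zero, Real.norm_of_nonneg hs₀.1]; exact hs₀.2
  have hφ_nonneg : 0 ≤ φ ‖y s₀‖ := (norm_nonneg _).trans (hy'_le s₀ hs₀)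
  calc ‖y s₀‖ ≤ ‖y 0‖ + ‖y s₀ - y 0‖ := norm_le_norm_add_norm_sub' _ _
    _ ≤ ‖y 0‖ + t * φ ‖y s₀‖ := by
      gcongr; exact hmvt.trans (by rw [mul_comm]; gcongr)

theorem Real.add_rpow_le_two_mul_rpow {p x M : ℝ} (hp₀ : 0 ≤ p) (hp₁ : p ≤ 1) (hx : 0 ≤ x)
    (hxM : x ≤ M) : (x + M) ^ p ≤ 2 * M ^ p := by
  calc (x + M) ^ p ≤ x ^ p + M ^ p := Real.rpow_add_le_add_rpow hx (hx.trans hxM) hp₀ hp₁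
    _ ≤ M ^ p + M ^ p := by gcongr
    _ = 2 * M ^ p := by ring

theorem Real.le_rpow_of_le_mul_rpow {p c M : ℝ} (hp : p < 1) (hM : 0 < M)
    (h : M ≤ c * M ^ p) : M ≤ c ^ (1 - p)⁻¹ := by
  have hMp : 0 < M ^ p := Real.rpow_pos_of_pos hM p
  have hc : 0 < c := pos_of_mul_pos_left (hM.trans_le h) hMp.le
  rw [Real.le_rpow_inv_iff_of_pos hM.le hc.le (sub_pos.2 hp), Real.rpow_sub hM, Real.rpow_one,
    div_le_iff₀ hMp]
  exact h

theorem le_three_rpow_mul_rpow_of_le_rpow_add_mul {κ a x M : ℝ} (hκ : 1 < κ) (ha : 0 < a)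
    (hx : 0 ≤ x) (hxa : x ≤ a ^ (κ / (κ - 1)))
    (h : M ≤ a ^ (κ / (κ - 1)) + a * (x + M) ^ (1 / κ)) :
    M ≤ 3 ^ (κ / (κ - 1)) * a ^ (κ / (κ - 1)) := by
  have hκ₀ : 0 < κ := zero_lt_one.trans hκ
  have hκ₁ : 0 < κ - 1 := sub_pos.2 hκ
  set R := a ^ (κ / (κ - 1))
  rcases le_or_gt M R with hMR | hRM
  · exact hMR.trans <| le_mul_of_one_le_left (by positivity)
      (Real.one_le_rpow (by norm_num) (div_pos hκ₀ hκ₁).le)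
  have hR : R = a * R ^ (1 / κ) := by
    have hexp : κ / (κ - 1) = 1 + κ / (κ - 1) * (1 / κ) := by field_simp; ring
    conv_lhs => rw [show R = a ^ (κ / (κ - 1)) from rfl, hexp]
    rw [Real.rpow_add ha, Real.rpow_one, Real.rpow_mul ha.le]
  have hpow : 1 / κ ≤ 1 := (div_le_one hκ₀).2 hκ.le
  have hself : M ≤ 3 * a * M ^ (1 / κ) :=
    calc M ≤ R + a * (x + M) ^ (1 / κ) := h
      _ ≤ a * M ^ (1 / κ) + a * (2 * M ^ (1 / κ)) := by
        gcongr
        · rw [hR]; gcongr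
        · exact Real.add_rpow_le_two_mul_rpow (by positivity) hpow hx (hxa.trans hRM.le)
      _ = 3 * a * M ^ (1 / κ) := by ring
  have hexp : κ / (κ - 1) = (1 - 1 / κ)⁻¹ := by field_simp
  rw [← Real.mul_rpow (by norm_num) ha.le, hexp]
  exact Real.le_rpow_of_le_mul_rpow ((div_lt_one hκ₀).2 hκ) ((Real.rpow_pos_of_pos ha _).trans hRM) hself

/-- Lemma 2.4 (1)(i), long-time regime: there is a constant `C' ≥ 1` depending
only on `κ` such that any curve started at `x` with `‖x‖ ≤ (Ut)^{κ/(κ-1)}`, whose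
speed is bounded by `U (x_min + ‖·‖)^{1/κ}` with small cut-off
`x_min ∈ [0, (Ut)^{κ/(κ-1)}]`, stays in the ball `B(0, C' (Ut)^{κ/(κ-1)})`. -/
theorem long_time_regime_bound (κ : ℝ) (hκ : 1 < κ) :
    ∃ C' : ℝ, 1 ≤ C' ∧
      ∀ (d : ℕ), 1 ≤ d →
        ∀ U t xmin : ℝ, 0 < U → 0 < t →
          xmin ∈ Set.Icc (0 : ℝ) ((U * t) ^ (κ / (κ - 1))) →
          ∀ x : EuclideanSpace ℝ (Fin d), ‖x‖ ≤ (U * t) ^ (κ / (κ - 1)) →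
            ∀ y y' : ℝ → EuclideanSpace ℝ (Fin d), y 0 = x →
              (∀ s ∈ Set.Icc (0 : ℝ) t, HasDerivAt y (y' s) s) →
              (∀ s ∈ Set.Icc (0 : ℝ) t, ‖y' s‖ ≤ U * (xmin + ‖y s‖) ^ (1 / κ)) →
              ∀ s ∈ Set.Icc (0 : ℝ) t, ‖y s‖ ≤ C' * (U * t) ^ (κ / (κ - 1)) := by
  refine ⟨3 ^ (κ / (κ - 1)), Real.one_le_rpow (by norm_num) (div_pos (by linarith) (by linarith)).le,
    fun d _ U t xmin hU ht hxmin x hx y y' hy0 hy hy' s hs ↦ ?_⟩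
  have hφ : MonotoneOn (fun r ↦ U * (xmin + r) ^ (1 / κ)) (Ici 0) := fun r hr _ _ hrr' ↦ by
    have : 0 ≤ xmin + r := add_nonneg hxmin.1 hr
    dsimp only
    gcongr
  obtain ⟨M, hyM, hM⟩ := exists_bound_le_norm_zero_add_mul_of_norm_deriv_le ht.le hφ hy hy'
  have hM' : M ≤ (U * t) ^ (κ / (κ - 1)) + U * t * (xmin + M) ^ (1 / κ) := by
    rw [hy0] at hM
    linarith [mul_left_comm t U ((xmin + M) ^ (1 / κ))]
  exact (hyM s hs).trans
    (le_three_rpow_mul_rpow_of_le_rpow_add_mul hκ (mul_pos hU ht) hxmin.1 hxmin.2 hM')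
end

section
/- There exists a constant C' ≥ 1, depending only on κ, such that the following holds (short-time regime, Lemma 2.4 (1)(ii)). Let d ≥ 1, κ > 1, U > 0, t > 0, x_min ∈ [0, (Ut)^{κ/(κ-1)}], and x ∈ ℝ^d with ‖x‖ ≥ (Ut)^{κ/(κ-1)}. Then every differentiable y : [0,t] → ℝ^d with y(0) = x and ‖y'(s)‖ ≤ U·(x_min + ‖y(s)‖)^{1/κ} for all s ∈ [0,t] satisfies ‖y(s) − x‖ ≤ C'·Ut·‖x‖^{1/κ} for all s ∈ [0,t]. -/
/-!
Take `C = 3^{1/(κ-1)}`, so that `C^κ = 3C > 2 + C`. As long as `‖y - x‖ ≤ C U s ‖x‖^{1/κ}` with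
`s ≤ t`, the assumption `‖x‖ ≥ (Ut)^{κ/(κ-1)}` (i.e. `Ut ‖x‖^{1/κ} ≤ ‖x‖`) gives
`x_min + ‖y‖ ≤ (2 + C) ‖x‖`, hence speed at most `U (2 + C)^{1/κ} ‖x‖^{1/κ} < C U ‖x‖^{1/κ}`.
So the curve can never catch up with the linear barrier `C U ‖x‖^{1/κ} s`.
-/

open Set

theorem norm_sub_le_mul_of_norm_deriv_lt_on_boundary {E : Type*} [NormedAddCommGroup E]
    [NormedSpace ℝ E] {y y' : ℝ → E} {t a : ℝ}
    (hderiv : ∀ s ∈ Icc 0 t, HasDerivAt y (y' s) s)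
    (hbound : ∀ s ∈ Ico 0 t, ‖y s - y 0‖ = a * s → ‖y' s‖ < a) :
    ∀ s ∈ Icc 0 t, ‖y s - y 0‖ ≤ a * s := by
  have hcont : ContinuousOn (fun s => y s - y 0) (Icc 0 t) := fun s hs =>
    (hderiv s hs).continuousAt.continuousWithinAt.sub continuousWithinAt_const
  have hbarrier : ∀ s, HasDerivAt (fun s : ℝ => a * s) a s := fun s => by
    simpa using (hasDerivAt_id s).const_mul a
  exact image_norm_le_of_norm_deriv_right_lt_deriv_boundary hcont
    (fun s hs => ((hderiv s (Ico_subset_Icc_self hs)).sub_const (y 0)).hasDerivWithinAt)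
    (by simp) hbarrier hbound

theorem mul_rpow_one_div_le_of_rpow_le {κ b r : ℝ} (hκ : 1 < κ) (hb : 0 < b) (hr : 0 < r)
    (h : b ^ (κ / (κ - 1)) ≤ r) : b * r ^ (1 / κ) ≤ r := by
  have hκ0 : 0 < κ := by linarith
  have hκ1 : 0 < κ - 1 := by linarith
  have hb_le : b ≤ r ^ ((κ - 1) / κ) := by
    have := Real.rpow_le_rpow (by positivity) h (by positivity : 0 ≤ (κ - 1) / κ)
    rwa [← Real.rpow_mul hb.le, show κ / (κ - 1) * ((κ - 1) / κ) = 1 by field_simp,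
      Real.rpow_one] at this
  calc b * r ^ (1 / κ) ≤ r ^ ((κ - 1) / κ) * r ^ (1 / κ) := by gcongr
    _ = r := by
      rw [← Real.rpow_add hr, show (κ - 1) / κ + 1 / κ = 1 by field_simp; ring, Real.rpow_one]

noncomputable def shortTimeConstant (κ : ℝ) : ℝ := 3 ^ (1 / (κ - 1))

theorem one_lt_shortTimeConstant {κ : ℝ} (hκ : 1 < κ) : 1 < shortTimeConstant κ :=
  Real.one_lt_rpow (by norm_num) (by simpa using hκ)

theorem two_add_shortTimeConstant_rpow_lt {κ : ℝ} (hκ : 1 < κ) :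
    (2 + shortTimeConstant κ) ^ (1 / κ) < shortTimeConstant κ := by
  set C := shortTimeConstant κ
  have hC := one_lt_shortTimeConstant hκ
  have hκ1 : κ - 1 ≠ 0 := by linarith
  have hCκ : C ^ κ = 3 * C := by
    rw [show C = 3 ^ (1 / (κ - 1)) from rfl, ← Real.rpow_mul (by norm_num : (0 : ℝ) ≤ 3),
      show 1 / (κ - 1) * κ = 1 + 1 / (κ - 1) by field_simp; ring,
      Real.rpow_add (by norm_num : (0 : ℝ) < 3), Real.rpow_one]
  calc (2 + C) ^ (1 / κ) < (C ^ κ) ^ (1 / κ) :=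
        Real.rpow_lt_rpow (by positivity) (by rw [hCκ]; linarith) (by positivity)
    _ = C := by rw [one_div, Real.rpow_rpow_inv (by positivity) (by positivity)]

/-- Lemma 2.4 (1)(ii), short-time regime: there is a constant `C' ≥ 1` depending
only on `κ` such that any curve started at `x` with `‖x‖ ≥ (Ut)^{κ/(κ-1)}`, whose
speed is bounded by `U (x_min + ‖·‖)^{1/κ}` with small cut-off
`x_min ∈ [0, (Ut)^{κ/(κ-1)}]`, stays in the ball `B(x, C' Ut ‖x‖^{1/κ})`. -/
theorem short_time_regime_bound (κ : ℝ) (hκ : 1 < κ) :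
    ∃ C' : ℝ, 1 ≤ C' ∧
      ∀ (d : ℕ), 1 ≤ d →
        ∀ U t xmin : ℝ, 0 < U → 0 < t →
          xmin ∈ Set.Icc (0 : ℝ) ((U * t) ^ (κ / (κ - 1))) →
          ∀ x : EuclideanSpace ℝ (Fin d), (U * t) ^ (κ / (κ - 1)) ≤ ‖x‖ →
            ∀ y y' : ℝ → EuclideanSpace ℝ (Fin d), y 0 = x →
              (∀ s ∈ Set.Icc (0 : ℝ) t, HasDerivAt y (y' s) s) →
              (∀ s ∈ Set.Icc (0 : ℝ) t, ‖y' s‖ ≤ U * (xmin + ‖y s‖) ^ (1 / κ)) →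
              ∀ s ∈ Set.Icc (0 : ℝ) t, ‖y s - x‖ ≤ C' * (U * t) * ‖x‖ ^ (1 / κ) := by
  set C := shortTimeConstant κ
  have hC := one_lt_shortTimeConstant hκ
  refine ⟨C, hC.le, fun d _ U t xmin hU ht hxmin x hx y y' hy0 hderiv hbound => ?_⟩
  have hx0 : 0 < ‖x‖ := (Real.rpow_pos_of_pos (mul_pos hU ht) _).trans_le hx
  have hUtx := mul_rpow_one_div_le_of_rpow_le hκ (mul_pos hU ht) hx0 hx
  have hfence : ∀ s ∈ Icc 0 t, ‖y s - y 0‖ ≤ C * U * ‖x‖ ^ (1 / κ) * s := by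
    refine norm_sub_le_mul_of_norm_deriv_lt_on_boundary hderiv fun s hs hs_eq => ?_
    have hdrift : C * U * ‖x‖ ^ (1 / κ) * s ≤ C * ‖x‖ := by
      calc C * U * ‖x‖ ^ (1 / κ) * s ≤ C * U * ‖x‖ ^ (1 / κ) * t := by gcongr; exact hs.2.le
        _ = C * (U * t * ‖x‖ ^ (1 / κ)) := by ring
        _ ≤ C * ‖x‖ := by gcongr
    have hys : ‖y s‖ ≤ ‖x‖ + C * ‖x‖ := by
      have := norm_le_norm_add_norm_sub' (y s) (y 0)
      rw [hy0] at this hs_eq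
      linarith
    have hmass : xmin + ‖y s‖ ≤ (2 + C) * ‖x‖ := by linarith [hxmin.2.trans hx]
    calc ‖y' s‖ ≤ U * (xmin + ‖y s‖) ^ (1 / κ) := hbound s (Ico_subset_Icc_self hs)
      _ ≤ U * ((2 + C) * ‖x‖) ^ (1 / κ) := by
        gcongr; exact add_nonneg hxmin.1 (norm_nonneg _)
      _ = U * ((2 + C) ^ (1 / κ) * ‖x‖ ^ (1 / κ)) := by rw [Real.mul_rpow (by positivity) hx0.le]
      _ < U * (C * ‖x‖ ^ (1 / κ)) := by gcongr; exact two_add_shortTimeConstant_rpow_lt hκ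
      _ = C * U * ‖x‖ ^ (1 / κ) := by ring
  intro s hs
  calc ‖y s - x‖ ≤ C * U * ‖x‖ ^ (1 / κ) * s := hy0 ▸ hfence s hs
    _ ≤ C * U * ‖x‖ ^ (1 / κ) * t := by gcongr; exact hs.2
    _ = C * (U * t) * ‖x‖ ^ (1 / κ) := by ring
end

section
/- There exists a constant C ≥ 1, depending only on κ, such that the following holds (large cut-off regime, upper inclusion of Lemma 2.4 (2)). Let d ≥ 1, κ > 1, U > 0, t > 0 and x_min ≥ (Ut)^{κ/(κ-1)}. Then every differentiable y : [0,t] → ℝ^d with y(0) = x and ‖y'(s)‖ ≤ U·(x_min + ‖y(s)‖)^{1/κ} for all s ∈ [0,t] satisfies ‖y(s) − x‖ ≤ C·Ut·max(x_min, ‖x‖)^{1/κ} for all s ∈ [0,t]. -/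
/-!
Put `M = max x_min ‖x‖`. Since `x_min + ‖y‖ ≤ 2M + ‖y - x‖` and `a^{1/κ} ≤ M^{1/κ - 1} a` for
`a ≥ M`, the speed of `y` is at most `K ‖y - x‖ + 2U M^{1/κ}` with `K = U M^{1/κ - 1}`.
The large cut-off condition says exactly that `K t ≤ 1`, so on `[0, t]` Gronwall's inequality
loses only a constant factor against the linear bound `2U M^{1/κ} s`.
-/

open Real Set

lemma Real.rpow_le_rpow_sub_one_mul {a M p : ℝ} (hM : 0 < M) (hMa : M ≤ a) (hp : p ≤ 1) :
    a ^ p ≤ M ^ (p - 1) * a := by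
  have ha : 0 < a := hM.trans_le hMa
  calc a ^ p = a ^ (p - 1) * a := by rw [rpow_sub_one ha.ne', div_mul_cancel₀ _ ha.ne']
    _ ≤ M ^ (p - 1) * a :=
      mul_le_mul_of_nonneg_right (rpow_le_rpow_of_nonpos hM hMa (by linarith)) ha.le

lemma Real.mul_rpow_sub_one_le_one_of_rpow_le {κ a M : ℝ} (hκ : 1 < κ) (ha : 0 ≤ a) (hM : 0 < M)
    (h : a ^ (κ / (κ - 1)) ≤ M) : a * M ^ (1 / κ - 1) ≤ 1 := by
  have hκ0 : 0 < κ - 1 := by linarith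
  have ha_le : a ≤ M ^ (κ / (κ - 1))⁻¹ :=
    (le_rpow_inv_iff_of_pos ha hM.le (by positivity)).2 h
  calc a * M ^ (1 / κ - 1) ≤ M ^ (κ / (κ - 1))⁻¹ * M ^ (1 / κ - 1) := by gcongr
    _ = 1 := by
      rw [← rpow_add hM]
      convert rpow_zero M using 2
      field_simp
      ring

lemma gronwallBound_zero_le_two_mul {K ε x : ℝ} (hK : 0 ≤ K) (hε : 0 ≤ ε) (hx : 0 ≤ x)
    (hKx : K * x ≤ 1) : gronwallBound 0 K ε x ≤ 2 * ε * x := by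
  rcases hK.eq_or_lt with rfl | hK
  · rw [gronwallBound_K0]
    nlinarith
  have hKx0 : 0 ≤ K * x := by positivity
  have hexp : exp (K * x) - 1 ≤ 2 * (K * x) := by
    have h := abs_exp_sub_one_le (x := K * x) (by rwa [abs_of_nonneg hKx0])
    rw [abs_of_nonneg hKx0] at h
    exact (le_abs_self _).trans h
  rw [gronwallBound_of_K_ne_0 hK.ne']
  calc 0 * exp (K * x) + ε / K * (exp (K * x) - 1) ≤ ε / K * (2 * (K * x)) := by
        rw [zero_mul, zero_add]; gcongr
    _ = 2 * ε * x := by field_simp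

theorem norm_sub_le_of_norm_deriv_le_affine {E : Type*} [NormedAddCommGroup E] [NormedSpace ℝ E]
    {f f' : ℝ → E} {K ε t : ℝ} (hK : 0 ≤ K) (hε : 0 ≤ ε) (hKt : K * t ≤ 1)
    (hf : ∀ s ∈ Icc 0 t, HasDerivAt f (f' s) s)
    (hbound : ∀ s ∈ Ico 0 t, ‖f' s‖ ≤ K * ‖f s - f 0‖ + ε) :
    ∀ s ∈ Icc 0 t, ‖f s - f 0‖ ≤ 2 * ε * s := by
  intro s hs
  have hgron := norm_le_gronwallBound_of_norm_deriv_right_le (f := fun s => f s - f 0) (δ := 0)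
    (fun s hs => ((hf s hs).continuousAt.sub continuousAt_const).continuousWithinAt)
    (fun s hs => ((hf s (Ico_subset_Icc_self hs)).sub_const (f 0)).hasDerivWithinAt)
    (by simp) hbound s hs
  rw [sub_zero] at hgron
  exact hgron.trans <| gronwallBound_zero_le_two_mul hK hε hs.1 <|
    (mul_le_mul_of_nonneg_left hs.2 hK).trans hKt

/-- Lemma 2.4 (2), large cut-off regime, upper inclusion: there is a constant
`C ≥ 1` depending only on `κ` such that any curve started at `x` whose speed is
bounded by `U (x_min + ‖·‖)^{1/κ}` with large cut-off `x_min ≥ (Ut)^{κ/(κ-1)}`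
stays in the ball `B(x, C·Ut·max(x_min,‖x‖)^{1/κ})`. -/
theorem large_cutoff_upper_inclusion (κ : ℝ) (hκ : 1 < κ) :
    ∃ C : ℝ, 1 ≤ C ∧
      ∀ (d : ℕ), 1 ≤ d →
        ∀ U t xmin : ℝ, 0 < U → 0 < t →
          (U * t) ^ (κ / (κ - 1)) ≤ xmin →
          ∀ x : EuclideanSpace ℝ (Fin d),
            ∀ y y' : ℝ → EuclideanSpace ℝ (Fin d), y 0 = x →
              (∀ s ∈ Set.Icc (0 : ℝ) t, HasDerivAt y (y' s) s) →
              (∀ s ∈ Set.Icc (0 : ℝ) t, ‖y' s‖ ≤ U * (xmin + ‖y s‖) ^ (1 / κ)) →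
              ∀ s ∈ Set.Icc (0 : ℝ) t,
                ‖y s - x‖ ≤ C * (U * t) * (max xmin ‖x‖) ^ (1 / κ) := by
  refine ⟨4, by norm_num, fun d _ U t xmin hU ht hxmin x y y' hy0 hderiv hspeed => ?_⟩
  set M := max xmin ‖x‖
  have hxmin0 : 0 < xmin := (rpow_pos_of_pos (mul_pos hU ht) _).trans_le hxmin
  have hM : 0 < M := hxmin0.trans_le (le_max_left _ _)
  have hp : 1 / κ ≤ 1 := by rw [div_le_one (by linarith)]; exact hκ.le
  have hKt : U * M ^ (1 / κ - 1) * t ≤ 1 := by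
    rw [mul_right_comm]
    exact mul_rpow_sub_one_le_one_of_rpow_le hκ (by positivity) hM
      (hxmin.trans (le_max_left _ _))
  have hlinear : ∀ s ∈ Ico 0 t,
      ‖y' s‖ ≤ U * M ^ (1 / κ - 1) * ‖y s - y 0‖ + 2 * U * M ^ (1 / κ) := by
    intro s hs
    have hy : xmin + ‖y s‖ ≤ 2 * M + ‖y s - x‖ := by
      linarith [norm_le_norm_sub_add (y s) x, le_max_left xmin ‖x‖, le_max_right xmin ‖x‖]
    calc ‖y' s‖ ≤ U * (xmin + ‖y s‖) ^ (1 / κ) := hspeed s (Ico_subset_Icc_self hs)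
      _ ≤ U * (M ^ (1 / κ - 1) * (2 * M + ‖y s - x‖)) := by
        gcongr
        exact (rpow_le_rpow (by positivity) hy (by positivity)).trans
          (rpow_le_rpow_sub_one_mul hM (by linarith [norm_nonneg (y s - x)]) hp)
      _ = _ := by rw [hy0, rpow_sub_one hM.ne']; field_simp; ring
  intro s hs
  calc ‖y s - x‖ ≤ 2 * (2 * U * M ^ (1 / κ)) * s := by
        simpa only [hy0] using norm_sub_le_of_norm_deriv_le_affine (by positivity)
          (by positivity) hKt hderiv hlinear s hs
    _ = 4 * U * M ^ (1 / κ) * s := by ring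
    _ ≤ 4 * U * M ^ (1 / κ) * t := by gcongr; exact hs.2
    _ = 4 * (U * t) * M ^ (1 / κ) := by ring
end

section
/- Let C₀ ≥ 1. There exists a constant C ≥ 1, depending only on κ and C₀, such that the following holds (Lemma 2.7, bound on generalized flows). Let d ≥ 1, κ > 1, Ũ ≥ U ≥ 1, t ≥ 1/Ũ, and x_min ≥ (Ũt)^{κ/(κ-1)}. Let u₀ : ℝ^d → ℝ^d satisfy ‖u₀(w)‖ ≤ U(1 + ‖w‖)^{1/κ} for all w. Let 𝒳 : [0,t] × ℝ^d → ℝ^d satisfy ‖𝒳(s,y) − y‖ ≤ C₀·Ũt·max(x_min, ‖y‖)^{1/κ} for all (s,y). Then every differentiable curve y : [0,t] → ℝ^d with y(0) = x and y'(s) = u₀(𝒳(s, y(s))) for all s ∈ [0,t] satisfies ‖y(s) − x‖ ≤ C·Ut·max(Ũt·x_min^{1/κ}, ‖x‖)^{1/κ} for all s ∈ [0,t]. -/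
/-!
Let `p = κ/(κ-1)` be the Hölder conjugate of `κ` and `M = max(Ũt·x_min^{1/κ}, ‖x‖)`. Since
`x_min ≥ (Ũt)^p`, the displacement of `𝒳` at `y` is at most `C₀ (M + ‖y‖)`: for `‖y‖ ≥ x_min`
one has `Ũt ≤ ‖y‖^{1/p}` and `‖y‖^{1/p} ‖y‖^{1/κ} = ‖y‖`. Hence `φ(s) = ‖y(s) - x‖` grows with
speed at most `4C₀U (M + φ)^{1/κ}`, and comparison with the solution
`(M^{1/p} + 4C₀U s)^p - M` of the corresponding ODE, together with `Ut ≤ M^{1/p}` and the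
convexity of `r ↦ r^p`, gives `φ ≤ C·Ut·M^{1/κ}`.
-/

open Set Real

lemma rpow_sub_rpow_le_mul_sub {p x y : ℝ} (hp : 1 ≤ p) (hx : 0 ≤ x) (hxy : x ≤ y) :
    y ^ p - x ^ p ≤ p * y ^ (p - 1) * (y - x) := by
  rcases hxy.eq_or_lt with rfl | hlt
  · simp
  have hslope := (convexOn_rpow hp).slope_le_of_hasDerivAt hx (hx.trans hlt.le) hlt
    (hasDerivAt_rpow_const (Or.inr hp))
  rwa [slope_def_field, div_le_iff₀ (sub_pos.2 hlt)] at hslope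

lemma add_rpow_sub_rpow_le_of_le_mul {p b c r x : ℝ} (hp : 1 ≤ p) (hb : 0 ≤ b) (hc : 0 ≤ c)
    (hx : 0 ≤ x) (hxr : x ≤ c * r) (hrb : r ≤ b) :
    (b + x) ^ p - b ^ p ≤ p * (1 + c) ^ (p - 1) * c * r * b ^ (p - 1) := by
  have hbase : b + x ≤ (1 + c) * b := by nlinarith
  calc (b + x) ^ p - b ^ p ≤ p * (b + x) ^ (p - 1) * (b + x - b) :=
        rpow_sub_rpow_le_mul_sub hp hb (by linarith)
    _ ≤ p * ((1 + c) * b) ^ (p - 1) * (c * r) := by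
        rw [add_sub_cancel_left]
        gcongr
    _ = p * (1 + c) ^ (p - 1) * c * r * b ^ (p - 1) := by
        rw [mul_rpow (by positivity) hb]; ring

lemma one_add_norm_le_of_norm_sub_le {E : Type*} [SeminormedAddCommGroup E] {C₀ M : ℝ}
    {v w x : E} (hC₀ : 1 ≤ C₀) (hM : 1 ≤ M) (hx : ‖x‖ ≤ M) (hvw : ‖v - w‖ ≤ C₀ * (M + ‖w‖)) :
    1 + ‖v‖ ≤ 4 * C₀ * (M + ‖w - x‖) := by
  have hv := norm_le_norm_sub_add v w
  have hw := norm_le_norm_sub_add w x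
  nlinarith [norm_nonneg (w - x)]

namespace Real.HolderConjugate

variable {p q : ℝ}

lemma rpow_rpow_one_div_conj (hpq : p.HolderConjugate q) {x : ℝ} (hx : 0 ≤ x) :
    (x ^ p) ^ (1 / q) = x ^ (p - 1) := by
  rw [← rpow_mul hx, mul_one_div, hpq.div_conj_eq_sub_one]

lemma rpow_le_mul_rpow_one_div_conj (hpq : p.HolderConjugate q) {A m : ℝ} (hA : 0 ≤ A)
    (hm : A ^ p ≤ m) : A ^ p ≤ A * m ^ (1 / q) := by
  calc A ^ p = A * (A ^ p) ^ (1 / q) := by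
        rw [hpq.rpow_rpow_one_div_conj hA, ← rpow_one_add' hA (by linarith [hpq.lt]),
          add_sub_cancel]
    _ ≤ A * m ^ (1 / q) := by gcongr; exact hpq.symm.one_div_nonneg

lemma mul_max_rpow_le_add (hpq : p.HolderConjugate q) {A m z : ℝ} (hA : 0 ≤ A)
    (hm : A ^ p ≤ m) (hz : 0 ≤ z) : A * max m z ^ (1 / q) ≤ A * m ^ (1 / q) + z := by
  rcases le_total z m with hzm | hmz
  · rw [max_eq_left hzm]; linarith
  rw [max_eq_right hmz]
  have hAz : A ≤ z ^ (1 / p) := by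
    calc A = (A ^ p) ^ (1 / p) := by rw [← rpow_mul hA, mul_one_div_cancel hpq.ne_zero, rpow_one]
      _ ≤ z ^ (1 / p) := by gcongr; exacts [hpq.one_div_nonneg, hm.trans hmz]
  calc A * z ^ (1 / q) ≤ z ^ (1 / p) * z ^ (1 / q) := by gcongr
    _ = z := by
        rw [← rpow_add' hz (by rw [hpq.one_div_add_one_div]; norm_num),
          hpq.one_div_add_one_div, div_one, rpow_one]
    _ ≤ A * m ^ (1 / q) + z :=
        le_add_of_nonneg_left (mul_nonneg hA (rpow_nonneg ((rpow_nonneg hA p).trans hm) _))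

theorem norm_sub_le_of_norm_deriv_le_rpow {E : Type*} [NormedAddCommGroup E] [NormedSpace ℝ E]
    (hpq : p.HolderConjugate q) {f f' : ℝ → E} {a b t : ℝ} (ha : 0 < a) (hb : 0 < b)
    (hf : ContinuousOn f (Icc 0 t)) (hf' : ∀ s ∈ Ico 0 t, HasDerivWithinAt f (f' s) (Ici s) s)
    (bound : ∀ s ∈ Ico 0 t, ‖f' s‖ ≤ a * (b ^ p + ‖f s - f 0‖) ^ (1 / q)) :
    ∀ s ∈ Icc 0 t, ‖f s - f 0‖ ≤ (b + a * s) ^ p - b ^ p := by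
  have hB (s : ℝ) : HasDerivAt (fun s ↦ (b + a * s) ^ p - b ^ p)
      (a * p * (b + a * s) ^ (p - 1)) s := by
    have hlin : HasDerivAt (fun s ↦ b + a * s) a s := by
      simpa using ((hasDerivAt_id s).const_mul a).const_add b
    convert (hlin.rpow_const (Or.inr hpq.lt.le)).sub_const (b ^ p) using 1
  -- `(b + a s)^p` solves `ψ' = p a ψ^{1/q}`, which beats the bound `a ψ^{1/q}` because `p > 1`.
  refine image_norm_le_of_norm_deriv_right_lt_deriv_boundary (f := fun s ↦ f s - f 0)
    (hf.sub continuousOn_const) (fun s hs ↦ (hf' s hs).sub_const _) (by simp) hB ?_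
  intro s hs hfB
  have hpos : 0 < b + a * s := by nlinarith [hs.1]
  calc ‖f' s‖ ≤ a * (b ^ p + ‖f s - f 0‖) ^ (1 / q) := bound s hs
    _ = 1 * (a * (b + a * s) ^ (p - 1)) := by
        rw [hfB, add_sub_cancel, hpq.rpow_rpow_one_div_conj hpos.le, one_mul]
    _ < p * (a * (b + a * s) ^ (p - 1)) := by gcongr; exact hpq.lt
    _ = a * p * (b + a * s) ^ (p - 1) := by ring

theorem norm_apply_le_of_norm_sub_le_mul_max_rpow {E : Type*} [SeminormedAddCommGroup E]
    (hpq : p.HolderConjugate q) {u : E → E} {U C₀ A m M : ℝ} {v w x : E}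
    (hU : 0 ≤ U) (hu : ∀ z, ‖u z‖ ≤ U * (1 + ‖z‖) ^ (1 / q)) (hC₀ : 1 ≤ C₀) (hA : 0 ≤ A)
    (hm : A ^ p ≤ m) (hAM : A * m ^ (1 / q) ≤ M) (hM : 1 ≤ M) (hxM : ‖x‖ ≤ M)
    (hvw : ‖v - w‖ ≤ C₀ * A * max m ‖w‖ ^ (1 / q)) :
    ‖u v‖ ≤ 4 * C₀ * U * (M + ‖w - x‖) ^ (1 / q) := by
  have hdisp : ‖v - w‖ ≤ C₀ * (M + ‖w‖) := by
    rw [mul_assoc] at hvw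
    exact hvw.trans (by gcongr; linarith [hpq.mul_max_rpow_le_add hA hm (norm_nonneg w)])
  have hc : (4 * C₀) ^ (1 / q) ≤ 4 * C₀ :=
    rpow_le_self_of_one_le (by linarith) (div_le_one_of_le₀ hpq.symm.lt.le hpq.symm.nonneg)
  calc ‖u v‖ ≤ U * (1 + ‖v‖) ^ (1 / q) := hu v
    _ ≤ U * (4 * C₀ * (M + ‖w - x‖)) ^ (1 / q) := by
        have := hpq.symm.one_div_nonneg
        gcongr
        exact one_add_norm_le_of_norm_sub_le hC₀ hM hxM hdisp
    _ ≤ 4 * C₀ * U * (M + ‖w - x‖) ^ (1 / q) := by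
        rw [mul_rpow (by linarith) (by positivity), mul_comm (4 * C₀) U, mul_assoc U]
        gcongr

end Real.HolderConjugate

/-- Lemma 2.7, bound on generalized flows: if `u₀` satisfies (Hyp1) with
`U ≥ 1`, `κ > 1`, `𝒳` displaces points by at most the large-cut-off bound
`C₀·Ũt·max(x_min,‖y‖)^{1/κ}`, and `y` solves the generalized flow
`y'(s) = u₀(𝒳(s,y(s)))` started at `x`, then for `t ≥ 1/Ũ` one has
`‖y(s) - x‖ ≤ C·Ut·max(Ũt·x_min^{1/κ}, ‖x‖)^{1/κ}`. -/
theorem generalized_flow_bound (κ C₀ : ℝ) (hκ : 1 < κ) (hC₀ : 1 ≤ C₀) :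
    ∃ C : ℝ, 1 ≤ C ∧
      ∀ (d : ℕ), 1 ≤ d →
        ∀ U U' t xmin : ℝ, 1 ≤ U → U ≤ U' → 1 / U' ≤ t →
          (U' * t) ^ (κ / (κ - 1)) ≤ xmin →
          ∀ u₀ : EuclideanSpace ℝ (Fin d) → EuclideanSpace ℝ (Fin d),
            (∀ w, ‖u₀ w‖ ≤ U * (1 + ‖w‖) ^ (1 / κ)) →
            ∀ 𝒳 : ℝ → EuclideanSpace ℝ (Fin d) → EuclideanSpace ℝ (Fin d),
              (∀ s ∈ Set.Icc (0 : ℝ) t, ∀ w,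
                ‖𝒳 s w - w‖ ≤ C₀ * (U' * t) * (max xmin ‖w‖) ^ (1 / κ)) →
              ∀ x : EuclideanSpace ℝ (Fin d),
                ∀ y : ℝ → EuclideanSpace ℝ (Fin d), y 0 = x →
                  (∀ s ∈ Set.Icc (0 : ℝ) t, HasDerivAt y (u₀ (𝒳 s (y s))) s) →
                  ∀ s ∈ Set.Icc (0 : ℝ) t,
                    ‖y s - x‖ ≤
                      C * (U * t) * (max (U' * t * xmin ^ (1 / κ)) ‖x‖) ^ (1 / κ) := by
  set p := κ / (κ - 1)
  have hpq : p.HolderConjugate κ := (HolderConjugate.conjExponent hκ).symm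
  set c := 4 * C₀
  refine ⟨p * (1 + c) ^ (p - 1) * c, ?_, ?_⟩
  · exact one_le_mul_of_one_le_of_one_le (one_le_mul_of_one_le_of_one_le hpq.lt.le
      (one_le_rpow (by linarith) hpq.sub_one_pos.le)) (by linarith)
  intro d _ U U' t xmin hU hUU' ht hxmin u₀ hu₀ 𝒳 h𝒳 x y hy0 hy s hs
  have ht0 : 0 ≤ t := (one_div_pos.2 (by linarith)).le.trans ht
  have hA : 1 ≤ U' * t := (div_le_iff₀' (by linarith)).1 ht
  set M := max (U' * t * xmin ^ (1 / κ)) ‖x‖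
  have hAM : (U' * t) ^ p ≤ M :=
    (hpq.rpow_le_mul_rpow_one_div_conj (by linarith) hxmin).trans (le_max_left _ _)
  have hM : 1 ≤ M := (one_le_rpow hA hpq.nonneg).trans hAM
  set b := M ^ (1 / p)
  have hbM : b ^ p = M := by rw [← rpow_mul (by linarith), one_div_mul_cancel hpq.ne_zero, rpow_one]
  have hUb : U * t ≤ b := by
    rw [← rpow_le_rpow_iff (by positivity) (by positivity) hpq.pos, hbM]
    exact (rpow_le_rpow (by positivity) (by gcongr) hpq.nonneg).trans hAM
  have hflow := hpq.norm_sub_le_of_norm_deriv_le_rpow (a := c * U) (b := b)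
    (by positivity) (by positivity) (fun s hs ↦ (hy s hs).continuousAt.continuousWithinAt)
    (fun s hs ↦ (hy s (Ico_subset_Icc_self hs)).hasDerivWithinAt)
    (fun s hs ↦ hbM ▸ hy0 ▸ hpq.norm_apply_le_of_norm_sub_le_mul_max_rpow (by linarith) hu₀ hC₀
      (by linarith) hxmin (le_max_left _ _) hM (le_max_right _ _) (h𝒳 s (Ico_subset_Icc_self hs) _))
    s hs
  calc ‖y s - x‖ ≤ (b + c * U * s) ^ p - b ^ p := hy0 ▸ hflow
    _ ≤ p * (1 + c) ^ (p - 1) * c * (U * t) * b ^ (p - 1) :=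
        add_rpow_sub_rpow_le_of_le_mul hpq.lt.le (by positivity) (by positivity)
          (by have := hs.1; positivity) (by rw [mul_assoc]; gcongr; exact hs.2) hUb
    _ = p * (1 + c) ^ (p - 1) * c * (U * t) * M ^ (1 / κ) := by
        rw [← hbM, hpq.rpow_rpow_one_div_conj (by positivity)]
end

section
/- Let κ > 1, C > 1, U > 0 and let R > 0 satisfy R^{(κ-1)/κ} ≥ 4(C−1)Ut for a given t > 0. Then for all s with 0 ≤ s ≤ t: (R − 4(C−1)·Ut·R^{1/κ}) + (C−1)·Us·(R − 4(C−1)·Ut·R^{1/κ})^{1/κ} ≤ R − 4(C−1)·U(t−s)·R^{1/κ}. -/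
/-!
With `p = 1/κ`, `v = (C-1)U` and `K = 4`, write `a = K v t R^p` for the distance of the upper
endpoint from `R`. Since `R^{(κ-1)/κ} R^{1/κ} = R`, the hypothesis `4(C-1)Ut ≤ R^{(κ-1)/κ}`
gives `a ≤ R`, so the endpoint `R - a` is nonnegative and its `p`-th power is at most `R^p`.
Hence in time `s` the trajectory gains at most `v s R^p`, while the endpoint recedes by
`K v s R^p`.
-/

open Real

theorem mul_rpow_one_div_le_of_le_rpow {κ c R : ℝ} (hκ : κ ≠ 0) (hR : 0 ≤ R)
    (h : c ≤ R ^ ((κ - 1) / κ)) : c * R ^ (1 / κ) ≤ R := by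
  have hsum : (κ - 1) / κ + 1 / κ = 1 := by field_simp; ring
  calc c * R ^ (1 / κ) ≤ R ^ ((κ - 1) / κ) * R ^ (1 / κ) := by gcongr
    _ = R := by rw [← rpow_add' hR (by rw [hsum]; exact one_ne_zero), hsum, rpow_one]

theorem sub_add_mul_rpow_le_of_mul_rpow_le {p v K R s t : ℝ} (hp : 0 ≤ p) (hv : 0 ≤ v)
    (hK : 1 ≤ K) (hR : 0 ≤ R) (hs : 0 ≤ s) (hst : s ≤ t) (h : K * v * t * R ^ p ≤ R) :
    (R - K * v * t * R ^ p) + v * s * (R - K * v * t * R ^ p) ^ p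
      ≤ R - K * v * (t - s) * R ^ p := by
  have hRp : 0 ≤ R ^ p := rpow_nonneg hR p
  have ha : 0 ≤ K * v * t * R ^ p := by
    have : 0 ≤ K := by linarith
    have : 0 ≤ t := hs.trans hst
    positivity
  have hvs : 0 ≤ v * s := mul_nonneg hv hs
  have hpow : (R - K * v * t * R ^ p) ^ p ≤ R ^ p :=
    rpow_le_rpow (sub_nonneg.2 h) (sub_le_self R ha) hp
  calc (R - K * v * t * R ^ p) + v * s * (R - K * v * t * R ^ p) ^ p
      ≤ (R - K * v * t * R ^ p) + v * s * R ^ p := by gcongr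
    _ ≤ (R - K * v * t * R ^ p) + K * (v * s * R ^ p) := by
        gcongr _ + ?_; exact le_mul_of_one_le_left (mul_nonneg hvs hRp) hK
    _ = R - K * v * (t - s) * R ^ p := by ring

theorem upper_barrier_inequality_general (κ C U R t : ℝ) (hκ : 1 < κ) (hC : 1 < C)
    (hU : 0 < U) (hR : 0 < R)
    (hRt : 4 * (C - 1) * U * t ≤ R ^ ((κ - 1) / κ)) :
    ∀ s : ℝ, 0 ≤ s → s ≤ t →
      (R - 4 * (C - 1) * U * t * R ^ (1 / κ)) +
          (C - 1) * U * s * (R - 4 * (C - 1) * U * t * R ^ (1 / κ)) ^ (1 / κ)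
        ≤ R - 4 * (C - 1) * U * (t - s) * R ^ (1 / κ) := by
  intro s hs hst
  have hκ0 : 0 < κ := one_pos.trans hκ
  have hv : 0 ≤ (C - 1) * U := mul_nonneg (sub_nonneg.2 hC.le) hU.le
  have h := mul_rpow_one_div_le_of_le_rpow hκ0.ne' hR.le hRt
  simpa only [mul_assoc] using
    sub_add_mul_rpow_le_of_mul_rpow_le (one_div_nonneg.2 hκ0.le) hv (by norm_num : (1 : ℝ) ≤ 4)
      hR.le hs hst (by simpa only [mul_assoc] using h)

/-- Upper barrier inequality (3.7) (eq:Imin): the upper endpoint of a safe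
interval is not crossed outward by a trajectory of radial speed at most
`(C-1)U·(radius)^{1/κ}`. -/
theorem upper_barrier_inequality (κ C U R t : ℝ) (hκ : 1 < κ) (hC : 1 < C)
    (hU : 0 < U) (hR : 0 < R) (ht : 0 < t)
    (hRt : 4 * (C - 1) * U * t ≤ R ^ ((κ - 1) / κ)) :
    ∀ s : ℝ, 0 ≤ s → s ≤ t →
      (R - 4 * (C - 1) * U * t * R ^ (1 / κ)) +
          (C - 1) * U * s * (R - 4 * (C - 1) * U * t * R ^ (1 / κ)) ^ (1 / κ)
        ≤ R - 4 * (C - 1) * U * (t - s) * R ^ (1 / κ) :=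
  upper_barrier_inequality_general κ C U R t hκ hC hU hR hRt
end

section
/- There exists a constant C₀ ≥ 1, depending only on κ, such that for every C ≥ C₀ the following safe zone stability property holds. Let d ≥ 1, κ > 1, U ≥ 1, t > 0, write ⟨a⟩ = max(1,a), and let R, R' be reals with R' ≥ 4R and R ≥ (16C⟨Ut⟩)^{κ/(κ-1)}. Let u₀ : ℝ^d → ℝ^d satisfy ‖u₀(w)‖ ≤ U(1 + ‖w‖)^{1/κ} for every w with R ≤ ‖w‖ ≤ R'. For τ ∈ [0,t] set I(τ) = [R + 4(C−1)Uτ·R^{1/κ}, R' − 4(C−1)Uτ·R'^{1/κ}]. Then every differentiable curve y : [0,t] → ℝ^d with y'(s) = u₀(y(s)) for all s ∈ [0,t] and ‖y(0)‖ ∈ I(t) satisfies, for every s ∈ [0,t]: ‖y(s)‖ ∈ I(t−s) (in particular R ≤ ‖y(s)‖ ≤ R'), ‖y(0)‖/2 ≤ ‖y(s)‖ ≤ 2‖y(0)‖, and ‖y(s) − y(0)‖ ≤ (C−1)·Ut·‖y(0)‖^{1/κ}. -/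
/-! All three estimates are fencing arguments. Since `R ≥ (16C⟨Ut⟩)^{κ/(κ-1)}`, every `r ≥ R`
satisfies `16(C-1)Ut·r^{1/κ} ≤ r`, so each end `ρ ∈ {R, R'}` of `I(t - s)` stays within `ρ/4` of
`ρ`. A curve touching that end is therefore inside the annulus with `1 + ‖y‖ ≤ 2ρ`, hence moves at
speed at most `2Uρ^{1/κ}`, strictly slower than the end itself, which moves outwards at speed
`4(C-1)Uρ^{1/κ}`; so the curve never leaves `I(t - s)`. The same argument against the ray
`s ↦ (C-1)U‖y 0‖^{1/κ} s` then bounds the displacement by `(C-1)Ut‖y 0‖^{1/κ} ≤ ‖y 0‖/16`. -/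

open Set Topology

theorem le_image_norm_of_norm_deriv_right_lt_neg_deriv_boundary' {E : Type*}
    [NormedAddCommGroup E] [NormedSpace ℝ E] {f f' : ℝ → E} {a b : ℝ}
    (hf : ContinuousOn f (Icc a b)) (hf' : ∀ x ∈ Ico a b, HasDerivWithinAt f (f' x) (Ici x) x)
    {B B' : ℝ → ℝ} (ha : B a ≤ ‖f a‖) (hB : ContinuousOn B (Icc a b))
    (hB' : ∀ x ∈ Ico a b, HasDerivWithinAt B (B' x) (Ici x) x)
    (bound : ∀ x ∈ Ico a b, ‖f x‖ = B x → ‖f' x‖ < -B' x) :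
    ∀ ⦃x⦄, x ∈ Icc a b → B x ≤ ‖f x‖ := by
  have slope_le : ∀ x ∈ Ico a b, ∀ r, ‖f' x‖ < r →
      ∃ᶠ z in 𝓝[>] x, slope (fun x => -‖f x‖) x z < r := by
    intro x hx r hr
    refine ((hf' x hx).liminf_right_norm_slope_le hr).mp
      (eventually_nhdsWithin_of_forall fun z (hxz : x < z) hz => lt_of_le_of_lt ?_ hz)
    rw [slope_def_field, Real.norm_eq_abs, abs_of_pos (sub_pos.2 hxz), div_eq_inv_mul]
    gcongr
    linarith [norm_sub_norm_le (f x) (f z), norm_sub_rev (f x) (f z)]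
  intro x hx
  simpa using image_le_of_liminf_slope_right_lt_deriv_boundary' (f := fun x => -‖f x‖)
    (B := fun x => -B x) (B' := fun x => -B' x) (continuous_norm.comp_continuousOn hf).neg
    slope_le (neg_le_neg ha) hB.neg (fun x hx => (hB' x hx).neg)
    (fun x hx hfx => bound x hx (neg_inj.1 hfx)) hx

namespace Real

theorem rpow_le_mul_rpow_of_le_mul {x z c p : ℝ} (hx : 0 ≤ x) (hc : 1 ≤ c) (hp₀ : 0 ≤ p)
    (hp₁ : p ≤ 1) (h : x ≤ c * z) : x ^ p ≤ c * z ^ p := by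
  have hz : 0 ≤ z := nonneg_of_mul_nonneg_right (hx.trans h) (by linarith)
  calc x ^ p ≤ (c * z) ^ p := rpow_le_rpow hx h hp₀
    _ = c ^ p * z ^ p := mul_rpow (by linarith) hz
    _ ≤ c * z ^ p := by gcongr; exact rpow_le_self_of_one_le hc hp₁

theorem mul_rpow_one_div_le_of_rpow_le {X r κ : ℝ} (hκ : 1 < κ) (hX : 0 ≤ X)
    (h : X ^ (κ / (κ - 1)) ≤ r) : X * r ^ (1 / κ) ≤ r := by
  have hr : 0 ≤ r := (rpow_nonneg hX _).trans h
  have hκ₀ : 0 < κ := by linarith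
  have hκ₁ : 0 < κ - 1 := by linarith
  have hX_le : X ≤ r ^ ((κ - 1) / κ) := by
    calc X = (X ^ (κ / (κ - 1))) ^ ((κ - 1) / κ) := by
          rw [← rpow_mul hX, show κ / (κ - 1) * ((κ - 1) / κ) = 1 by field_simp, rpow_one]
      _ ≤ r ^ ((κ - 1) / κ) := by gcongr
  calc X * r ^ (1 / κ) ≤ r ^ ((κ - 1) / κ) * r ^ (1 / κ) := by gcongr
    _ = r := by
      rw [← rpow_add' hr (by positivity), show (κ - 1) / κ + 1 / κ = 1 by field_simp; ring,
        rpow_one]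

end Real

theorem sixteen_mul_drift_le {κ C U t r : ℝ} (hκ : 1 < κ) (hC : 1 ≤ C)
    (hr : (16 * C * max 1 (U * t)) ^ (κ / (κ - 1)) ≤ r) :
    16 * (C - 1) * U * t * r ^ (1 / κ) ≤ r := by
  have hmax : 1 ≤ max 1 (U * t) := le_max_left _ _
  have hX : 0 ≤ 16 * C * max 1 (U * t) := by positivity
  have hrate : 16 * (C - 1) * U * t ≤ 16 * C * max 1 (U * t) := by
    nlinarith [le_max_right 1 (U * t)]
  calc 16 * (C - 1) * U * t * r ^ (1 / κ) ≤ 16 * C * max 1 (U * t) * r ^ (1 / κ) := by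
        gcongr; exact Real.rpow_nonneg ((Real.rpow_nonneg hX _).trans hr) _
    _ ≤ r := Real.mul_rpow_one_div_le_of_rpow_le hκ hX hr

section SafeZone

variable {E : Type*} [NormedAddCommGroup E] {κ C U t R R' : ℝ} {u₀ : E → E}

theorem norm_apply_le_two_mul_rpow (hκ : 1 ≤ κ) (hU : 0 ≤ U)
    (hu₀ : ∀ w, R ≤ ‖w‖ → ‖w‖ ≤ R' → ‖u₀ w‖ ≤ U * (1 + ‖w‖) ^ (1 / κ)) {w : E} {ρ : ℝ}
    (hRw : R ≤ ‖w‖) (hwR' : ‖w‖ ≤ R') (hρ : 1 + ‖w‖ ≤ 2 * ρ) :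
    ‖u₀ w‖ ≤ 2 * U * ρ ^ (1 / κ) := by
  have hp₁ : 1 / κ ≤ 1 := by rw [div_le_one (by linarith)]; exact hκ
  calc ‖u₀ w‖ ≤ U * (1 + ‖w‖) ^ (1 / κ) := hu₀ w hRw hwR'
    _ ≤ U * (2 * ρ ^ (1 / κ)) := by
      gcongr
      exact Real.rpow_le_mul_rpow_of_le_mul (by positivity) one_le_two (by positivity) hp₁ hρ
    _ = 2 * U * ρ ^ (1 / κ) := by ring

variable [NormedSpace ℝ E] {y : ℝ → E}

theorem lower_end_safe_interval_le_norm (hκ : 1 ≤ κ) (hC : 2 ≤ C) (hU : 0 < U) (hR : 2 ≤ R)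
    (hRR' : 2 * R ≤ R') (hwidth : 16 * (C - 1) * U * t * R ^ (1 / κ) ≤ R)
    (hu₀ : ∀ w, R ≤ ‖w‖ → ‖w‖ ≤ R' → ‖u₀ w‖ ≤ U * (1 + ‖w‖) ^ (1 / κ))
    (hy : ∀ s ∈ Icc 0 t, HasDerivAt y (u₀ (y s)) s)
    (hy₀ : R + 4 * (C - 1) * U * t * R ^ (1 / κ) ≤ ‖y 0‖) :
    ∀ s ∈ Icc 0 t, R + 4 * (C - 1) * U * (t - s) * R ^ (1 / κ) ≤ ‖y s‖ := by
  have hk : 0 < (C - 1) * U * R ^ (1 / κ) :=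
    mul_pos (mul_pos (by linarith) hU) (Real.rpow_pos_of_pos (by linarith) _)
  refine le_image_norm_of_norm_deriv_right_lt_neg_deriv_boundary'
    (B' := fun _ => -(4 * (C - 1) * U * R ^ (1 / κ))) (HasDerivAt.continuousOn hy)
    (fun x hx => (hy x (Ico_subset_Icc_self hx)).hasDerivWithinAt) (by simpa using hy₀)
    (by fun_prop) (fun x _ => ?_) ?_
  · simpa using ((((hasDerivAt_id x).const_sub t).const_mul (4 * (C - 1) * U)).mul_const
      (R ^ (1 / κ))).const_add R |>.hasDerivWithinAt
  intro x hx hyx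
  have h₁ := mul_pos hk (sub_pos.2 hx.2)
  have h₂ := mul_nonneg hk.le hx.1
  have hspeed := norm_apply_le_two_mul_rpow hκ hU.le hu₀ (w := y x) (ρ := R)
    (by linarith) (by linarith) (by linarith)
  nlinarith

theorem norm_le_upper_end_safe_interval (hκ : 1 ≤ κ) (hC : 2 ≤ C) (hU : 0 < U) (hR' : 1 ≤ R')
    (hRR' : 2 * R ≤ R') (hwidth : 16 * (C - 1) * U * t * R' ^ (1 / κ) ≤ R')
    (hu₀ : ∀ w, R ≤ ‖w‖ → ‖w‖ ≤ R' → ‖u₀ w‖ ≤ U * (1 + ‖w‖) ^ (1 / κ))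
    (hy : ∀ s ∈ Icc 0 t, HasDerivAt y (u₀ (y s)) s)
    (hy₀ : ‖y 0‖ ≤ R' - 4 * (C - 1) * U * t * R' ^ (1 / κ)) :
    ∀ s ∈ Icc 0 t, ‖y s‖ ≤ R' - 4 * (C - 1) * U * (t - s) * R' ^ (1 / κ) := by
  have hk : 0 < (C - 1) * U * R' ^ (1 / κ) :=
    mul_pos (mul_pos (by linarith) hU) (Real.rpow_pos_of_pos (by linarith) _)
  refine image_norm_le_of_norm_deriv_right_lt_deriv_boundary'
    (B' := fun _ => 4 * (C - 1) * U * R' ^ (1 / κ)) (HasDerivAt.continuousOn hy)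
    (fun x hx => (hy x (Ico_subset_Icc_self hx)).hasDerivWithinAt) (by simpa using hy₀)
    (by fun_prop) (fun x _ => ?_) ?_
  · simpa using ((((hasDerivAt_id x).const_sub t).const_mul (4 * (C - 1) * U)).mul_const
      (R' ^ (1 / κ))).const_sub R' |>.hasDerivWithinAt
  intro x hx hyx
  have h₁ := mul_pos hk (sub_pos.2 hx.2)
  have h₂ := mul_nonneg hk.le hx.1
  have hspeed := norm_apply_le_two_mul_rpow hκ hU.le hu₀ (w := y x) (ρ := R')
    (by linarith) (by linarith) (by linarith)
  nlinarith

theorem norm_sub_le_of_forall_mem_annulus (hκ : 1 ≤ κ) (hC : 3 < C) (hU : 0 < U)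
    (hu₀ : ∀ w, R ≤ ‖w‖ → ‖w‖ ≤ R' → ‖u₀ w‖ ≤ U * (1 + ‖w‖) ^ (1 / κ))
    (hy : ∀ s ∈ Icc 0 t, HasDerivAt y (u₀ (y s)) s)
    (hann : ∀ s ∈ Icc 0 t, R ≤ ‖y s‖ ∧ ‖y s‖ ≤ R') (hy₀ : 2 ≤ ‖y 0‖)
    (hwidth : 16 * (C - 1) * U * t * ‖y 0‖ ^ (1 / κ) ≤ ‖y 0‖) :
    ∀ s ∈ Icc 0 t, ‖y s - y 0‖ ≤ (C - 1) * U * s * ‖y 0‖ ^ (1 / κ) := by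
  have hk : 0 < (C - 1) * U * ‖y 0‖ ^ (1 / κ) :=
    mul_pos (mul_pos (by linarith) hU) (Real.rpow_pos_of_pos (by linarith) _)
  refine image_norm_le_of_norm_deriv_right_lt_deriv_boundary' (f := fun s => y s - y 0)
    (B := fun s => (C - 1) * U * s * ‖y 0‖ ^ (1 / κ))
    (B' := fun _ => (C - 1) * U * ‖y 0‖ ^ (1 / κ))
    ((HasDerivAt.continuousOn hy).sub continuousOn_const)
    (fun x hx => ((hy x (Ico_subset_Icc_self hx)).sub_const _).hasDerivWithinAt) (by simp)
    (by fun_prop) (fun x _ => ?_) ?_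
  · simpa using (((hasDerivAt_id x).const_mul ((C - 1) * U)).mul_const
      (‖y 0‖ ^ (1 / κ))).hasDerivWithinAt
  intro x hx hyx
  have h₁ := mul_nonneg hk.le (sub_nonneg.2 hx.2.le)
  have hyx_le : ‖y x‖ ≤ ‖y 0‖ + ‖y x - y 0‖ := norm_le_insert' _ _
  have hspeed := norm_apply_le_two_mul_rpow hκ hU.le hu₀ (w := y x) (ρ := ‖y 0‖)
    (hann x (Ico_subset_Icc_self hx)).1 (hann x (Ico_subset_Icc_self hx)).2 (by nlinarith)
  nlinarith

end SafeZone

/-- Safe zone stability property (core case (i) of the proof of Lemma 3.2,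
eqs. (3.5)–(3.9)): there is `C₀ ≥ 1` depending only on `κ` such that for all
`C ≥ C₀`, any integral curve of a velocity `u₀` which grows sublinearly like
`U(1+‖·‖)^{1/κ}` on the safe annulus `{R ≤ ‖w‖ ≤ R'}`, started with
`‖y 0‖ ∈ I(t)`, satisfies `‖y s‖ ∈ I(t-s)`, `‖y 0‖/2 ≤ ‖y s‖ ≤ 2‖y 0‖` and
`‖y s - y 0‖ ≤ (C-1)Ut‖y 0‖^{1/κ}` for all `s ∈ [0,t]`, where
`I(τ) = [R + 4(C-1)Uτ·R^{1/κ}, R' - 4(C-1)Uτ·R'^{1/κ}]`. -/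
theorem safe_zone_stability (κ : ℝ) (hκ : 1 < κ) :
    ∃ C₀ : ℝ, 1 ≤ C₀ ∧
      ∀ C : ℝ, C₀ ≤ C →
        ∀ (d : ℕ), 1 ≤ d →
          ∀ U t R R' : ℝ, 1 ≤ U → 0 < t → 4 * R ≤ R' →
            (16 * C * max 1 (U * t)) ^ (κ / (κ - 1)) ≤ R →
            ∀ u₀ : EuclideanSpace ℝ (Fin d) → EuclideanSpace ℝ (Fin d),
              (∀ w, R ≤ ‖w‖ → ‖w‖ ≤ R' → ‖u₀ w‖ ≤ U * (1 + ‖w‖) ^ (1 / κ)) →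
              ∀ y : ℝ → EuclideanSpace ℝ (Fin d),
                (∀ s ∈ Set.Icc (0 : ℝ) t, HasDerivAt y (u₀ (y s)) s) →
                ‖y 0‖ ∈ Set.Icc (R + 4 * (C - 1) * U * t * R ^ (1 / κ))
                    (R' - 4 * (C - 1) * U * t * R' ^ (1 / κ)) →
                ∀ s ∈ Set.Icc (0 : ℝ) t,
                  ‖y s‖ ∈ Set.Icc (R + 4 * (C - 1) * U * (t - s) * R ^ (1 / κ))
                      (R' - 4 * (C - 1) * U * (t - s) * R' ^ (1 / κ)) ∧
                  ‖y 0‖ / 2 ≤ ‖y s‖ ∧ ‖y s‖ ≤ 2 * ‖y 0‖ ∧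
                  ‖y s - y 0‖ ≤ (C - 1) * U * t * ‖y 0‖ ^ (1 / κ) := by
  refine ⟨4, by norm_num, ?_⟩
  intro C hC d _ U t R R' hU ht hRR' hR u₀ hu₀ y hy hy₀ s hs
  have hR₆₄ : 64 ≤ R := by
    have hX : 64 ≤ 16 * C * max 1 (U * t) := by nlinarith [le_max_left 1 (U * t)]
    refine hX.trans ((Real.self_le_rpow_of_one_le (by linarith) ?_).trans hR)
    rw [le_div_iff₀ (by linarith)]
    linarith
  have hwidth : ∀ r, R ≤ r → 16 * (C - 1) * U * t * r ^ (1 / κ) ≤ r := fun r hr =>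
    sixteen_mul_drift_le hκ (by linarith) (hR.trans hr)
  have hdrift : ∀ τ r, 0 ≤ τ → 0 ≤ r → 0 ≤ (C - 1) * U * τ * r ^ (1 / κ) := fun τ r hτ hr =>
    mul_nonneg (mul_nonneg (mul_nonneg (by linarith) (by linarith)) hτ) (Real.rpow_nonneg hr _)
  have hlower := lower_end_safe_interval_le_norm hκ.le (by linarith) (by linarith) (by linarith)
    (by linarith) (hwidth R le_rfl) hu₀ hy hy₀.1
  have hupper := norm_le_upper_end_safe_interval hκ.le (by linarith) (by linarith) (by linarith)
    (by linarith) (hwidth R' (by linarith)) hu₀ hy hy₀.2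
  have hann : ∀ s ∈ Icc 0 t, R ≤ ‖y s‖ ∧ ‖y s‖ ≤ R' := fun s hs =>
    ⟨by linarith [hlower s hs, hdrift (t - s) R (by linarith [hs.2]) (by linarith)],
     by linarith [hupper s hs, hdrift (t - s) R' (by linarith [hs.2]) (by linarith)]⟩
  have ha : R ≤ ‖y 0‖ := (hann 0 ⟨le_rfl, ht.le⟩).1
  have hdisp : ‖y s - y 0‖ ≤ (C - 1) * U * t * ‖y 0‖ ^ (1 / κ) := by
    have := norm_sub_le_of_forall_mem_annulus hκ.le (by linarith) (by linarith) hu₀ hy hann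
      (by linarith) (hwidth _ ha) s hs
    linarith [hdrift (t - s) ‖y 0‖ (by linarith [hs.2]) (norm_nonneg _)]
  have hwidth_a := hwidth _ ha
  refine ⟨⟨hlower s hs, hupper s hs⟩, ?_, ?_, hdisp⟩ <;>
    linarith [norm_sub_norm_le (y s) (y 0), norm_sub_norm_le (y 0) (y s), norm_sub_rev (y s) (y 0)]
end

section
/- There exists a constant C₀ ≥ 1, depending only on κ and d, such that for every C ≥ C₀ the following holds (Lemma 3.2, case of small initial data). Let d ≥ 1, κ > 1, U ≥ 1, t > 0, and write ⟨a⟩ = max(1,a). Let (R_n)_{n≥1} be an increasing sequence of reals with R_1 ≥ 1, R_{2i} − R_{2i-1} ≤ R_{2i-1}^{1/κ} and R_{2i+1} ≥ 4R_{2i} for all i ≥ 1. Let ũ₀ : ℝ^d → ℝ^d satisfy ‖ũ₀(x)‖ ≤ U(1+‖x‖)^{1/κ} for all x, and let u₀ : ℝ^d → ℝ^d be a Lipschitz function with u₀(x) = ũ₀(x) for every x whose norm does not lie in ⋃_{i≥1} [R_{2i-1}, R_{2i}]. Then every differentiable curve y : [0,t] → ℝ^d with y'(s) = u₀(y(s))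 for all s ∈ [0,t] and ‖y(0)‖ ≤ 32·(16C⟨Ut⟩)^{κ/(κ-1)} satisfies ‖y(s) − y(0)‖ ≤ 96·(16C⟨Ut⟩)^{κ/(κ-1)} for all s ∈ [0,t]. -/
/-!
Let `B ⊆ ℝ` be the set of radii of the dangerous annuli and let `goodLength B r` be the length of
`(0, r] \ B`. Along an integral curve, `goodLength B ‖y s‖` is frozen while `‖y s‖` lies in the
interior of `B`, and elsewhere it grows at most at the speed `‖u₀ (y s)‖`, which is controlled by
(Hyp1) because `u₀` is continuous and agrees with `v₀` off `B`. The part of `(0, r]` covered by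
annuli has length at most `c r^{1/κ}`, since the widths are `≤ R_{2i-1}^{1/κ}` and the annuli
separate geometrically. With `K = 16 C⟨Ut⟩` and `P = K^{κ/(κ-1)}`, i.e. `P = K P^{1/κ}`, both
errors are small multiples of `P`, so a continuity argument keeps `‖y‖` below `64 P`.
-/

open Set Filter Topology MeasureTheory

theorem ContinuousOn.forall_lt_of_bootstrap {ρ : ℝ → ℝ} {a b M : ℝ}
    (hρ : ContinuousOn ρ (Icc a b)) (ha : ρ a < M)
    (hstep : ∀ τ ∈ Icc a b, (∀ s ∈ Icc a τ, ρ s ≤ M) → ρ τ < M) :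
    ∀ s ∈ Icc a b, ρ s < M := by
  by_contra! hexit
  obtain ⟨s₀, hs₀, hMs₀⟩ := hexit
  set T := Icc a b ∩ ρ ⁻¹' Ici M
  have hTclosed : IsClosed T := hρ.preimage_isClosed_of_isClosed isClosed_Icc isClosed_Ici
  have hTbdd : BddBelow T := ⟨a, fun s hs ↦ hs.1.1⟩
  have hτ : sInf T ∈ T := hTclosed.csInf_mem ⟨s₀, hs₀, hMs₀⟩ hTbdd
  have haτ : a ≠ sInf T := fun h ↦ (h ▸ hτ.2 : M ≤ ρ a).not_gt ha
  have hbefore : Ico a (sInf T) ⊆ Icc a (sInf T) ∩ ρ ⁻¹' Iic M := fun s hs ↦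
    ⟨Ico_subset_Icc_self hs, show ρ s ≤ M from not_lt.1 fun hMs ↦ hs.2.not_ge
      (csInf_le hTbdd ⟨⟨hs.1, hs.2.le.trans hτ.1.2⟩, hMs.le⟩)⟩
  have hclosed : IsClosed (Icc a (sInf T) ∩ ρ ⁻¹' Iic M) :=
    (hρ.mono (Icc_subset_Icc_right hτ.1.2)).preimage_isClosed_of_isClosed isClosed_Icc isClosed_Iic
  have hupto : ∀ s ∈ Icc a (sInf T), ρ s ≤ M := fun s hs ↦
    (closure_minimal hbefore hclosed (closure_Ico haτ ▸ hs)).2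
  exact (hstep (sInf T) hτ.1 hupto).not_ge hτ.2

noncomputable def goodLength (B : Set ℝ) (r : ℝ) : ℝ :=
  volume.real (Ioc 0 r \ B)

theorem volume_Ioc_diff_ne_top (r : ℝ) (B : Set ℝ) : volume (Ioc 0 r \ B) ≠ ⊤ :=
  ((measure_mono sdiff_subset).trans_lt measure_Ioc_lt_top).ne

namespace goodLength

variable {B : Set ℝ}

theorem monotone : Monotone (goodLength B) := fun _ _ h ↦
  measureReal_mono (sdiff_subset_sdiff_left (Ioc_subset_Ioc_right h)) (volume_Ioc_diff_ne_top _ _)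

theorem le_add_sub_of_le {r r' : ℝ} (h : r ≤ r') : goodLength B r' ≤ goodLength B r + (r' - r) := by
  calc goodLength B r' ≤ volume.real ((Ioc 0 r \ B) ∪ Ioc r r') :=
        measureReal_mono (fun x ⟨⟨hx0, hx⟩, hxB⟩ ↦ by
          rcases le_or_gt x r with hxr | hxr
          exacts [.inl ⟨⟨hx0, hxr⟩, hxB⟩, .inr ⟨hxr, hx⟩])
          (measure_union_ne_top (volume_Ioc_diff_ne_top _ _) measure_Ioc_lt_top.ne)
    _ ≤ goodLength B r + volume.real (Ioc r r') := measureReal_union_le _ _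
    _ = goodLength B r + (r' - r) := by rw [Real.volume_real_Ioc_of_le h]

theorem lipschitzWith_one : LipschitzWith 1 (goodLength B) := by
  refine LipschitzWith.of_le_add_mul 1 fun r r' ↦ ?_
  rw [NNReal.coe_one, one_mul, Real.dist_eq]
  rcases le_total r r' with h | h
  · exact (monotone h).trans (le_add_of_nonneg_right (abs_nonneg _))
  · linarith [le_add_sub_of_le (B := B) h, le_abs_self (r - r')]

theorem le_self {r : ℝ} (hr : 0 ≤ r) : goodLength B r ≤ r :=
  (measureReal_mono sdiff_subset measure_Ioc_lt_top.ne).trans_eq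
    (by rw [Real.volume_real_Ioc_of_le hr, sub_zero])

theorem le_of_Ioc_subset {r r' : ℝ} (h : Ioc r r' ⊆ B) : goodLength B r' ≤ goodLength B r :=
  measureReal_mono (fun _ ⟨⟨hx0, hx⟩, hxB⟩ ↦ ⟨⟨hx0, not_lt.1 fun hxr ↦ hxB (h ⟨hxr, hx⟩)⟩, hxB⟩)
    (volume_Ioc_diff_ne_top _ _)

theorem self_le_add {r : ℝ} (hr : 0 ≤ r) : r ≤ goodLength B r + volume.real (B ∩ Ioc 0 r) := by
  calc r = volume.real (Ioc 0 r) := by rw [Real.volume_real_Ioc_of_le hr, sub_zero]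
    _ = volume.real ((Ioc 0 r \ B) ∪ (B ∩ Ioc 0 r)) := by rw [inter_comm, sdiff_union_inter]
    _ ≤ _ := measureReal_union_le _ _

theorem eventually_le_of_mem_interior {ρ : ℝ} (h : ρ ∈ interior B) :
    ∀ᶠ r in 𝓝 ρ, goodLength B r ≤ goodLength B ρ := by
  obtain ⟨ε, hε, hball⟩ := Metric.mem_nhds_iff.1 (mem_interior_iff_mem_nhds.1 h)
  filter_upwards [Metric.ball_mem_nhds ρ hε] with r hr
  rcases le_total r ρ with hrρ | hρr
  · exact monotone hrρ
  · refine le_of_Ioc_subset fun x hx ↦ hball ?_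
    rw [Real.ball_eq_Ioo] at hr ⊢
    exact ⟨by linarith [hx.1, hε], hx.2.trans_lt hr.2⟩

end goodLength

section

variable {E : Type*} [NormedAddCommGroup E] [NormedSpace ℝ E]

theorem LipschitzWith.slope_comp_le_norm_slope {f : E → ℝ} (hf : LipschitzWith 1 f) (y : ℝ → E)
    {x z : ℝ} (hxz : x < z) : slope (f ∘ y) x z ≤ ‖slope y x z‖ := by
  have hnum : f (y z) - f (y x) ≤ ‖y z - y x‖ := by
    simpa [Real.dist_eq, dist_eq_norm] using (le_abs_self _).trans (hf.dist_le_mul (y z) (y x))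
  rw [slope_def_field, slope_def_module, norm_smul, norm_inv, Real.norm_of_nonneg (by linarith),
    inv_mul_eq_div]
  exact div_le_div_of_nonneg_right hnum (by linarith)

theorem frequently_slope_goodLength_norm_lt {B : Set ℝ} {y : ℝ → E} {v : E} {x V r : ℝ}
    (hy : HasDerivAt y v x) (hV : 0 ≤ V) (hv : ‖y x‖ ∉ interior B → ‖v‖ ≤ V) (hr : V < r) :
    ∃ᶠ z in 𝓝[>] x, slope (fun s ↦ goodLength B ‖y s‖) x z < r := by
  refine Eventually.frequently ?_
  by_cases hB : ‖y x‖ ∈ interior B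
  · have hloc : ∀ᶠ z in 𝓝 x, goodLength B ‖y z‖ ≤ goodLength B ‖y x‖ :=
      hy.continuousAt.norm.eventually (goodLength.eventually_le_of_mem_interior hB)
    filter_upwards [nhdsWithin_le_nhds hloc, self_mem_nhdsWithin] with z hz hxz
    rw [slope_def_field]
    exact (div_nonpos_of_nonpos_of_nonneg (sub_nonpos.2 hz) (sub_nonneg.2 (le_of_lt hxz))).trans_lt
      (hV.trans_lt hr)
  · have hslope : Tendsto (fun z ↦ ‖slope y x z‖) (𝓝[>] x) (𝓝 ‖v‖) :=
      ((hasDerivAt_iff_tendsto_slope.1 hy).mono_left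
        (nhdsWithin_mono _ fun _ hz ↦ ne_of_gt hz)).norm
    filter_upwards [hslope.eventually_lt_const ((hv hB).trans_lt hr), self_mem_nhdsWithin]
      with z hz hxz
    have hlip : LipschitzWith 1 (goodLength B ∘ norm : E → ℝ) := by
      simpa using goodLength.lipschitzWith_one.comp lipschitzWith_one_norm
    exact (hlip.slope_comp_le_norm_slope y hxz).trans_lt hz

theorem goodLength_norm_le_add_mul {B : Set ℝ} {y y' : ℝ → E} {a b V : ℝ} (hab : a ≤ b)
    (hy : ∀ s ∈ Icc a b, HasDerivAt y (y' s) s) (hV : 0 ≤ V)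
    (hy' : ∀ s ∈ Icc a b, ‖y s‖ ∉ interior B → ‖y' s‖ ≤ V) :
    goodLength B ‖y b‖ ≤ goodLength B ‖y a‖ + V * (b - a) := by
  refine image_le_of_liminf_slope_right_le_deriv_boundary
    (B := fun s ↦ goodLength B ‖y a‖ + V * (s - a)) (B' := fun _ ↦ V)
    ((goodLength.lipschitzWith_one.continuous.comp continuous_norm).comp_continuousOn
      fun s hs ↦ (hy s hs).continuousAt.continuousWithinAt) (by simp) (by fun_prop)
    (fun s _ ↦ ?_) (fun s hs r hr ↦ frequently_slope_goodLength_norm_lt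
      (hy s (Ico_subset_Icc_self hs)) hV (hy' s (Ico_subset_Icc_self hs)) hr) ⟨hab, le_rfl⟩
  simpa using ((((hasDerivAt_id s).sub_const a).const_mul V).const_add
    (goodLength B ‖y a‖)).hasDerivWithinAt (s := Ici s)

theorem mem_closure_norm_preimage {T : Set ℝ} {x : E} (hx : x ≠ 0) (h : ‖x‖ ∈ closure T) :
    x ∈ closure (norm ⁻¹' T) := by
  have hpos : ‖x‖ ∈ closure (Ioi 0 ∩ T) := isOpen_Ioi.inter_closure ⟨norm_pos_iff.2 hx, h⟩
  have hmaps : MapsTo (fun r : ℝ ↦ (r / ‖x‖) • x) (Ioi 0 ∩ T) (norm ⁻¹' T) := fun r ⟨hr, hrT⟩ ↦ by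
    simpa [norm_smul, abs_of_pos (mem_Ioi.1 hr), norm_ne_zero_iff.2 hx] using hrT
  simpa [norm_ne_zero_iff.2 hx] using map_mem_closure (by fun_prop) hpos hmaps

theorem norm_le_of_norm_notMem_interior {F : Type*} [NormedAddCommGroup F] {B : Set ℝ}
    {u v : E → F} {g : E → ℝ} (hu : Continuous u) (hg : Continuous g) (hv : ∀ x, ‖v x‖ ≤ g x)
    (huv : ∀ x, ‖x‖ ∉ B → u x = v x) (h0 : (0 : ℝ) ∉ B) {x : E} (hx : ‖x‖ ∉ interior B) :
    ‖u x‖ ≤ g x := by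
  rcases eq_or_ne x 0 with rfl | hx0
  · rw [huv 0 (by simpa using h0)]
    exact hv 0
  have hgood : x ∈ closure (norm ⁻¹' Bᶜ) :=
    mem_closure_norm_preimage hx0 (closure_compl (s := B) ▸ hx)
  exact closure_minimal (fun z hz ↦ (huv z hz ▸ hv z : ‖u z‖ ≤ g z)) (isClosed_le hu.norm hg) hgood

theorem norm_lt_of_speed_le_off_interior {B : Set ℝ} {y y' : ℝ → E} {t M V K : ℝ}
    (hy : ∀ s ∈ Icc 0 t, HasDerivAt y (y' s) s) (hV : 0 ≤ V) (ht : 0 ≤ t)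
    (hy' : ∀ s ∈ Icc 0 t, ‖y s‖ ≤ M → ‖y s‖ ∉ interior B → ‖y' s‖ ≤ V)
    (hB : volume.real (B ∩ Ioc 0 M) ≤ K) (hy0 : ‖y 0‖ + V * t + K < M) :
    ∀ s ∈ Icc 0 t, ‖y s‖ < M := by
  have hK : 0 ≤ K := measureReal_nonneg.trans hB
  refine ContinuousOn.forall_lt_of_bootstrap
    (fun s hs ↦ (hy s hs).continuousAt.norm.continuousWithinAt)
    (by nlinarith) fun τ hτ hupto ↦ ?_
  have hsub : Icc 0 τ ⊆ Icc 0 t := Icc_subset_Icc_right hτ.2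
  have hgrowth : goodLength B ‖y τ‖ ≤ goodLength B ‖y 0‖ + V * (τ - 0) :=
    goodLength_norm_le_add_mul hτ.1 (fun s hs ↦ hy s (hsub hs)) hV
      fun s hs ↦ hy' s (hsub hs) (hupto s hs)
  have hcovered : volume.real (B ∩ Ioc 0 ‖y τ‖) ≤ K :=
    (measureReal_mono (inter_subset_inter_right _ (Ioc_subset_Ioc_right (hupto τ ⟨hτ.1, le_rfl⟩)))
      ((measure_mono inter_subset_right).trans_lt measure_Ioc_lt_top).ne).trans hB
  calc ‖y τ‖ ≤ goodLength B ‖y τ‖ + volume.real (B ∩ Ioc 0 ‖y τ‖) :=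
        goodLength.self_le_add (norm_nonneg _)
    _ ≤ ‖y 0‖ + V * t + K := by
        nlinarith [goodLength.le_self (B := B) (norm_nonneg (y 0)), hτ.2]
    _ < M := hy0

end

theorem sum_rpow_le_of_mul_le_succ {a : ℕ → ℝ} {c p : ℝ} (hc : 1 < c) (hp : 0 < p)
    (ha : ∀ i, 0 ≤ a i) (hgrowth : ∀ i, c * a i ≤ a (i + 1)) :
    ∀ (N : ℕ) {r : ℝ}, 0 ≤ r → (∀ i < N, a i ≤ r) →
      ∑ i ∈ Finset.range N, a i ^ p ≤ (1 - (c ^ p)⁻¹)⁻¹ * r ^ p := by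
  have hcp : 1 < c ^ p := Real.one_lt_rpow hc hp
  set q := (c ^ p)⁻¹
  have hq : q < 1 := inv_lt_one_of_one_lt₀ hcp
  have hgeom : (1 - q)⁻¹ * q + 1 = (1 - q)⁻¹ := by
    have : 1 - q ≠ 0 := by linarith
    field_simp
    ring
  have hmono : Monotone a := monotone_nat_of_le_succ fun i ↦
    (le_mul_of_one_le_left (ha i) hc.le).trans (hgrowth i)
  intro N
  induction N with
  | zero => intro r hr _; simpa using by positivity
  | succ N ih =>
    intro r hr hbelow
    have hprev : ∀ i < N, a i ≤ a N / c := fun i hi ↦ by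
      rw [le_div_iff₀ (by linarith), mul_comm]
      exact (hgrowth i).trans (hmono hi)
    have hscale : (a N / c) ^ p = q * a N ^ p := by
      rw [Real.div_rpow (ha N) (by linarith), div_eq_inv_mul]
    calc ∑ i ∈ Finset.range (N + 1), a i ^ p
        = ∑ i ∈ Finset.range N, a i ^ p + a N ^ p := Finset.sum_range_succ _ _
      _ ≤ (1 - q)⁻¹ * (q * a N ^ p) + a N ^ p := by
          gcongr
          simpa [hscale] using ih (div_nonneg (ha N) (by linarith)) hprev
      _ = (1 - q)⁻¹ * a N ^ p := by linear_combination a N ^ p * hgeom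
      _ ≤ (1 - q)⁻¹ * r ^ p :=
          mul_le_mul_of_nonneg_left (Real.rpow_le_rpow (ha N) (hbelow N N.lt_succ_self) hp.le)
            (inv_nonneg.2 (by linarith))

theorem volume_real_iUnion_Icc_inter_Ioc_le {a b : ℕ → ℝ} {c p r : ℝ} (hc : 1 < c) (hp : 0 < p)
    (ha₀ : 0 < a 0) (hab : ∀ i, a i ≤ b i) (hsep : ∀ i, c * b i ≤ a (i + 1))
    (hwidth : ∀ i, b i - a i ≤ a i ^ p) (hr : 0 ≤ r) :
    volume.real ((⋃ i, Icc (a i) (b i)) ∩ Ioc 0 r) ≤ (1 - (c ^ p)⁻¹)⁻¹ * r ^ p := by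
  classical
  have hgrowth : ∀ i, c * a i ≤ a (i + 1) := fun i ↦
    (mul_le_mul_of_nonneg_left (hab i) (by linarith)).trans (hsep i)
  have hgeom : ∀ i, c ^ i * a 0 ≤ a i := fun i ↦ by
    induction i with
    | zero => simp
    | succ i ih =>
      rw [pow_succ', mul_assoc]
      exact (mul_le_mul_of_nonneg_left ih (by linarith)).trans (hgrowth i)
  have ha : ∀ i, 0 ≤ a i := fun i ↦
    (mul_nonneg (pow_nonneg (by linarith) i) ha₀.le).trans (hgeom i)
  have hmono : Monotone a := monotone_nat_of_le_succ fun i ↦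
    (le_mul_of_one_le_left (ha i) hc.le).trans (hgrowth i)
  have hexceeds : ∃ N, r < a N := by
    obtain ⟨N, hN⟩ := pow_unbounded_of_one_lt (r / a 0) hc
    exact ⟨N, ((div_lt_iff₀ ha₀).1 hN).trans_le (hgeom N)⟩
  set N := Nat.find hexceeds
  have hcover : (⋃ i, Icc (a i) (b i)) ∩ Ioc 0 r ⊆ ⋃ i ∈ Finset.range N, Icc (a i) (b i) := by
    rintro x ⟨hx, -, hxr⟩
    obtain ⟨i, hi⟩ := mem_iUnion.1 hx
    refine mem_iUnion₂.2 ⟨i, Finset.mem_range.2 (not_le.1 fun hNi ↦ ?_), hi⟩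
    exact (Nat.find_spec hexceeds).not_ge ((hmono hNi).trans (hi.1.trans hxr))
  calc volume.real ((⋃ i, Icc (a i) (b i)) ∩ Ioc 0 r)
      ≤ volume.real (⋃ i ∈ Finset.range N, Icc (a i) (b i)) :=
        measureReal_mono hcover (measure_biUnion_lt_top (Finset.range N).finite_toSet
          fun _ _ ↦ measure_Icc_lt_top).ne
    _ ≤ ∑ i ∈ Finset.range N, volume.real (Icc (a i) (b i)) := measureReal_biUnion_finset_le _ _
    _ ≤ ∑ i ∈ Finset.range N, a i ^ p := Finset.sum_le_sum fun i _ ↦ by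
        rw [Real.volume_real_Icc_of_le (hab i)]
        exact hwidth i
    _ ≤ (1 - (c ^ p)⁻¹)⁻¹ * r ^ p := sum_rpow_le_of_mul_le_succ hc hp ha hgrowth N hr
        fun i hi ↦ not_lt.1 (Nat.find_min hexceeds hi)

theorem rpow_div_sub_one_eq_mul_rpow_inv {K κ : ℝ} (hK : 0 < K) (hκ : 1 < κ) :
    K ^ (κ / (κ - 1)) = K * (K ^ (κ / (κ - 1))) ^ (1 / κ) := by
  have hexp : κ / (κ - 1) = 1 + κ / (κ - 1) * (1 / κ) := by
    field_simp [(by linarith : κ - 1 ≠ 0), (by linarith : κ ≠ 0)]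
    ring
  rw [← Real.rpow_mul hK.le, ← Real.rpow_one_add' hK.le (by rw [← hexp]; positivity), ← hexp]

theorem small_data_budget_lt {κ C U t c : ℝ} (hκ : 1 < κ) (hC : 1 ≤ C) (hc : c ≤ C) :
    32 * (16 * C * max 1 (U * t)) ^ (κ / (κ - 1))
      + U * (1 + 64 * (16 * C * max 1 (U * t)) ^ (κ / (κ - 1))) ^ (1 / κ) * t
      + c * (64 * (16 * C * max 1 (U * t)) ^ (κ / (κ - 1))) ^ (1 / κ)
      < 64 * (16 * C * max 1 (U * t)) ^ (κ / (κ - 1)) := by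
  set m := max 1 (U * t)
  set P := (16 * C * m) ^ (κ / (κ - 1))
  set Q := P ^ (1 / κ)
  have hm : 1 ≤ m := le_max_left _ _
  have hUt : U * t ≤ m := le_max_right _ _
  have hK : 1 ≤ 16 * C * m := by nlinarith
  have hP : 1 ≤ P := Real.one_le_rpow hK (div_nonneg (by linarith) (by linarith))
  have hp : 0 ≤ 1 / κ := by positivity
  have hp1 : 1 / κ ≤ 1 := by rw [div_le_one (by linarith)]; exact hκ.le
  have hQ : 0 < Q := Real.rpow_pos_of_pos (by linarith) _
  have hPQ : P = 16 * C * m * Q := rpow_div_sub_one_eq_mul_rpow_inv (by linarith) hκ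
  have hscale : ∀ {l : ℝ}, 1 ≤ l → (l * P) ^ (1 / κ) ≤ l * Q := fun hl ↦ by
    rw [Real.mul_rpow (by linarith) (by linarith)]
    exact mul_le_mul_of_nonneg_right (Real.rpow_le_self_of_one_le hl hp1) hQ.le
  have hspeed : (1 + 64 * P) ^ (1 / κ) ≤ 65 * Q :=
    (Real.rpow_le_rpow (by positivity) (by linarith) hp).trans (hscale (by norm_num))
  have hcov : (64 * P) ^ (1 / κ) ≤ 64 * Q := hscale (by norm_num)
  have hX : 0 ≤ (64 * P) ^ (1 / κ) := by positivity
  have h1 : U * (1 + 64 * P) ^ (1 / κ) * t ≤ m * (65 * Q) := by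
    rw [mul_right_comm]
    exact mul_le_mul hUt hspeed (by positivity) (by linarith)
  have h2 : c * (64 * P) ^ (1 / κ) ≤ C * (64 * Q) :=
    (mul_le_mul_of_nonneg_right hc hX).trans (mul_le_mul_of_nonneg_left hcov (by linarith))
  have hmQ : m * Q ≤ C * m * Q := by nlinarith
  have hCQ : C * Q ≤ C * m * Q := by nlinarith
  have hCmQ : 0 < C * m * Q := by positivity
  linarith

theorem small_initial_data_displacement_bound_general (d : ℕ) (κ : ℝ)
    (hκ : 1 < κ) :
    ∃ C₀ : ℝ, 1 ≤ C₀ ∧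
      ∀ C : ℝ, C₀ ≤ C →
        ∀ U t : ℝ, 1 ≤ U → 0 < t →
          ∀ R : ℕ → ℝ, 1 ≤ R 1 →
            (∀ n : ℕ, 1 ≤ n → R n < R (n + 1)) →
            (∀ i : ℕ, 1 ≤ i → R (2 * i) - R (2 * i - 1) ≤ (R (2 * i - 1)) ^ (1 / κ)) →
            (∀ i : ℕ, 1 ≤ i → 4 * R (2 * i) ≤ R (2 * i + 1)) →
            ∀ v₀ u₀ : EuclideanSpace ℝ (Fin d) → EuclideanSpace ℝ (Fin d),
              (∀ x, ‖v₀ x‖ ≤ U * (1 + ‖x‖) ^ (1 / κ)) →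
              (∃ L : NNReal, LipschitzWith L u₀) →
              (∀ x, (∀ i : ℕ, 1 ≤ i →
                  ‖x‖ ∉ Set.Icc (R (2 * i - 1)) (R (2 * i))) → u₀ x = v₀ x) →
              ∀ y : ℝ → EuclideanSpace ℝ (Fin d),
                (∀ s ∈ Set.Icc (0 : ℝ) t, HasDerivAt y (u₀ (y s)) s) →
                ‖y 0‖ ≤ 32 * (16 * C * max 1 (U * t)) ^ (κ / (κ - 1)) →
                ∀ s ∈ Set.Icc (0 : ℝ) t,
                  ‖y s - y 0‖ ≤ 96 * (16 * C * max 1 (U * t)) ^ (κ / (κ - 1)) := by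
  set c := (1 - ((4 : ℝ) ^ (1 / κ))⁻¹)⁻¹
  refine ⟨max 1 c, le_max_left _ _, ?_⟩
  intro C hC U t hU ht R hR1 hmono hwidth hsep v₀ u₀ hv ⟨L, hL⟩ hmatch y hy hy0 s hs
  set P := (16 * C * max 1 (U * t)) ^ (κ / (κ - 1))
  -- the annuli `[R (2i-1), R (2i)]`, `i ≥ 1`, reindexed from `0`
  set B := ⋃ i : ℕ, Icc (R (2 * i + 1)) (R (2 * i + 2))
  have hp : 0 < 1 / κ := by positivity
  have hC1 : 1 ≤ C := (le_max_left _ _).trans hC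
  have hP : 0 ≤ P := Real.rpow_nonneg (mul_nonneg (by linarith) (by simp)) _
  have hcov : volume.real (B ∩ Ioc 0 (64 * P)) ≤ c * (64 * P) ^ (1 / κ) :=
    volume_real_iUnion_Icc_inter_Ioc_le (by norm_num) hp (zero_lt_one.trans_le hR1)
      (fun i ↦ (hmono _ (by omega)).le) (fun i ↦ hsep (i + 1) (by omega))
      (fun i ↦ hwidth (i + 1) (by omega)) (by positivity)
  have hgood : ∀ x, ‖x‖ ∉ B → u₀ x = v₀ x := fun x hx ↦
    hmatch x fun i hi hmem ↦ hx <| mem_iUnion.2 ⟨i - 1, by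
      obtain ⟨j, rfl⟩ : ∃ j, i = j + 1 := ⟨i - 1, by omega⟩
      simpa [mul_add] using hmem⟩
  have hB0 : (0 : ℝ) ∉ B := by
    have hR : Monotone fun n ↦ R (n + 1) :=
      monotone_nat_of_le_succ fun n ↦ (hmono (n + 1) (by omega)).le
    simp only [B, mem_iUnion, not_exists]
    exact fun i h ↦ (hR1.trans (hR (Nat.zero_le (2 * i)))).not_gt (h.1.trans_lt one_pos)
  have hspeed : ∀ x, ‖x‖ ∉ interior B → ‖u₀ x‖ ≤ U * (1 + ‖x‖) ^ (1 / κ) := fun x ↦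
    norm_le_of_norm_notMem_interior hL.continuous (by fun_prop (disch := exact hp.le)) hv hgood hB0
  have hbound : ∀ s ∈ Icc 0 t, ‖y s‖ < 64 * P :=
    norm_lt_of_speed_le_off_interior (V := U * (1 + 64 * P) ^ (1 / κ)) hy
      (mul_nonneg (by linarith) (by positivity)) ht.le
      (fun s _ hsM hsB ↦ (hspeed _ hsB).trans (mul_le_mul_of_nonneg_left
        (Real.rpow_le_rpow (by positivity) (by linarith) hp.le) (by linarith)))
      hcov
      (by linarith [small_data_budget_lt (U := U) (t := t) hκ hC1 (le_max_right 1 c |>.trans hC)])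
  calc ‖y s - y 0‖ ≤ ‖y s‖ + ‖y 0‖ := norm_sub_le _ _
    _ ≤ 96 * P := by linarith [hbound s hs]

/-- Lemma 3.2, case of small initial data: there is `C₀ ≥ 1` depending only on
`κ` and `d` such that for all `C ≥ C₀`, if `u₀` is Lipschitz and coincides,
outside the dangerous annuli `{R_{2i-1} ≤ ‖x‖ ≤ R_{2i}}` of Definition 3.1, with
a velocity `v₀` satisfying (Hyp1), then any integral curve of `u₀` started with
`‖y 0‖ ≤ 32(16C⟨Ut⟩)^{κ/(κ-1)}` satisfies
`‖y s - y 0‖ ≤ 96(16C⟨Ut⟩)^{κ/(κ-1)}` on `[0,t]`. -/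
theorem small_initial_data_displacement_bound (d : ℕ) (hd : 1 ≤ d) (κ : ℝ)
    (hκ : 1 < κ) :
    ∃ C₀ : ℝ, 1 ≤ C₀ ∧
      ∀ C : ℝ, C₀ ≤ C →
        ∀ U t : ℝ, 1 ≤ U → 0 < t →
          ∀ R : ℕ → ℝ, 1 ≤ R 1 →
            (∀ n : ℕ, 1 ≤ n → R n < R (n + 1)) →
            (∀ i : ℕ, 1 ≤ i → R (2 * i) - R (2 * i - 1) ≤ (R (2 * i - 1)) ^ (1 / κ)) →
            (∀ i : ℕ, 1 ≤ i → 4 * R (2 * i) ≤ R (2 * i + 1)) →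
            ∀ v₀ u₀ : EuclideanSpace ℝ (Fin d) → EuclideanSpace ℝ (Fin d),
              (∀ x, ‖v₀ x‖ ≤ U * (1 + ‖x‖) ^ (1 / κ)) →
              (∃ L : NNReal, LipschitzWith L u₀) →
              (∀ x, (∀ i : ℕ, 1 ≤ i →
                  ‖x‖ ∉ Set.Icc (R (2 * i - 1)) (R (2 * i))) → u₀ x = v₀ x) →
              ∀ y : ℝ → EuclideanSpace ℝ (Fin d),
                (∀ s ∈ Set.Icc (0 : ℝ) t, HasDerivAt y (u₀ (y s)) s) →
                ‖y 0‖ ≤ 32 * (16 * C * max 1 (U * t)) ^ (κ / (κ - 1)) →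
                ∀ s ∈ Set.Icc (0 : ℝ) t,
                  ‖y s - y 0‖ ≤ 96 * (16 * C * max 1 (U * t)) ^ (κ / (κ - 1)) :=
  small_initial_data_displacement_bound_general d κ hκ
end

section
/- There exists a constant C₀ ≥ 1, depending only on κ, such that for every C ≥ C₀ the following holds. Let d ≥ 1, κ > 1, U ≥ 1, t > 0, and write ⟨a⟩ = max(1,a). Let (R_n)_{n≥1} be an increasing sequence with R_1 ≥ 1, R_{2i} − R_{2i-1} ≤ R_{2i-1}^{1/κ} and R_{2i+1} ≥ 4R_{2i} for all i ≥ 1. Let ũ₀ : ℝ^d → ℝ^d satisfy ‖ũ₀(x)‖ ≤ U(1+‖x‖)^{1/κ} for all x, and let u₀ : ℝ^d → ℝ^d be a Lipschitz function with u₀(x) = ũ₀(x) for every x whose norm does not lie in ⋃_{i≥1} [R_{2i-1}, R_{2i}]. For i ≥ 1 and τ ≥ 0 set I_i(τ) = [R_{2i} + 4(C−1)Uτ·R_{2i}^{1/κ}, R_{2i+1} − 4(C−1)Uτ·R_{2i+1}^{1/κ}]. Let (x^{(m)})_{m≥0} be a family of maps assigning to each (t', s, x) with 0 ≤ s ≤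 t' ≤ t and x ∈ ℝ^d a point x^{(m)}(t'; s, x) ∈ ℝ^d, such that x^{(0)}(t'; s, x) = x, x^{(m)}(t'; 0, x) = x, and for each m ≥ 1 the map s ↦ x^{(m)}(t'; s, x) is differentiable on [0,t'] with (d/ds) x^{(m)}(t'; s, x) = u₀( x^{(m-1)}(t'−s; t'−s, x^{(m)}(t'; s, x)) ). Then for every i with R_{2i} ≥ (16C⟨Ut⟩)^{κ/(κ-1)}, every m ≥ 0, every t' ∈ [0,t], every x with ‖x‖ ∈ I_i(t'), and every s ∈ [0,t']: ‖x^{(m)}(t'; s, x)‖ ∈ I_i(t'−s), ‖x‖/2 ≤ ‖x^{(m)}(t'; s, x)‖ ≤ 2‖x‖, and ‖x^{(m)}(t'; s, x) − x‖ ≤ 2^{1/κ}(C−1)·Ut'·‖x‖^{1/κ}. -/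
set_option maxHeartbeats 1000000


/-- Safe zone stability of Theorem 3.3 (non-viscous case): there is `C₀ ≥ 1`
depending only on `κ` such that for all `C ≥ C₀`, if `u₀` is Lipschitz and
coincides with a (Hyp1)-velocity `v₀` outside the dangerous annuli
`{R_{2i-1} ≤ ‖x‖ ≤ R_{2i}}`, and `(x^{(m)})` is the family of time-reversed
characteristics of the non-viscous approximation scheme, i.e.
`x^{(0)}(t';s,x) = x`, `x^{(m)}(t';0,x) = x` and
`(d/ds) x^{(m)}(t';s,x) = u₀(x^{(m-1)}(t'-s; t'-s, x^{(m)}(t';s,x)))`,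
then for every safe zone index `i` with `R_{2i} ≥ (16C⟨Ut⟩)^{κ/(κ-1)}`, every
`m`, every `t' ∈ [0,t]`, every `x` with `‖x‖ ∈ I_i(t')` and every `s ∈ [0,t']`:
`‖x^{(m)}(t';s,x)‖ ∈ I_i(t'-s)`, `‖x‖/2 ≤ ‖x^{(m)}(t';s,x)‖ ≤ 2‖x‖`, and
`‖x^{(m)}(t';s,x) - x‖ ≤ 2^{1/κ}(C-1)Ut'‖x‖^{1/κ}`, where
`I_i(τ) = [R_{2i} + 4(C-1)Uτ·R_{2i}^{1/κ}, R_{2i+1} - 4(C-1)Uτ·R_{2i+1}^{1/κ}]`. -/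
theorem characteristics_safe_zone_stability (κ : ℝ) (hκ : 1 < κ) :
    ∃ C₀ : ℝ, 1 ≤ C₀ ∧
      ∀ C : ℝ, C₀ ≤ C →
        ∀ (d : ℕ), 1 ≤ d →
          ∀ U t : ℝ, 1 ≤ U → 0 < t →
            ∀ R : ℕ → ℝ, 1 ≤ R 1 →
              (∀ n : ℕ, 1 ≤ n → R n < R (n + 1)) →
              (∀ i : ℕ, 1 ≤ i →
                R (2 * i) - R (2 * i - 1) ≤ (R (2 * i - 1)) ^ (1 / κ)) →
              (∀ i : ℕ, 1 ≤ i → 4 * R (2 * i) ≤ R (2 * i + 1)) →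
              ∀ v₀ u₀ : EuclideanSpace ℝ (Fin d) → EuclideanSpace ℝ (Fin d),
                (∀ x, ‖v₀ x‖ ≤ U * (1 + ‖x‖) ^ (1 / κ)) →
                (∃ L : NNReal, LipschitzWith L u₀) →
                (∀ x, (∀ i : ℕ, 1 ≤ i →
                    ‖x‖ ∉ Set.Icc (R (2 * i - 1)) (R (2 * i))) → u₀ x = v₀ x) →
                ∀ X : ℕ → ℝ → ℝ → EuclideanSpace ℝ (Fin d) →
                    EuclideanSpace ℝ (Fin d),
                  (∀ t' s : ℝ, ∀ x, X 0 t' s x = x) →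
                  (∀ m : ℕ, ∀ t' : ℝ, ∀ x, X m t' 0 x = x) →
                  (∀ m : ℕ, ∀ t' ∈ Set.Icc (0 : ℝ) t, ∀ x,
                    ∀ s ∈ Set.Icc (0 : ℝ) t',
                      HasDerivAt (fun σ => X (m + 1) t' σ x)
                        (u₀ (X m (t' - s) (t' - s) (X (m + 1) t' s x))) s) →
                  ∀ i : ℕ, 1 ≤ i →
                    (16 * C * max 1 (U * t)) ^ (κ / (κ - 1)) ≤ R (2 * i) →
                    ∀ m : ℕ, ∀ t' ∈ Set.Icc (0 : ℝ) t, ∀ x,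
                      ‖x‖ ∈ Set.Icc
                          (R (2 * i) + 4 * (C - 1) * U * t' * (R (2 * i)) ^ (1 / κ))
                          (R (2 * i + 1) -
                            4 * (C - 1) * U * t' * (R (2 * i + 1)) ^ (1 / κ)) →
                      ∀ s ∈ Set.Icc (0 : ℝ) t',
                        ‖X m t' s x‖ ∈ Set.Icc
                            (R (2 * i) +
                              4 * (C - 1) * U * (t' - s) * (R (2 * i)) ^ (1 / κ))
                            (R (2 * i + 1) -
                              4 * (C - 1) * U * (t' - s) *
                                (R (2 * i + 1)) ^ (1 / κ)) ∧
                        ‖x‖ / 2 ≤ ‖X m t' s x‖ ∧ ‖X m t' s x‖ ≤ 2 * ‖x‖ ∧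
                        ‖X m t' s x - x‖ ≤
                          (2 : ℝ) ^ (1 / κ) * (C - 1) * U * t' * ‖x‖ ^ (1 / κ) := by
  have hκ0 : (0:ℝ) < κ := by linarith
  have hκ1 : (0:ℝ) < κ - 1 := by linarith
  have hinv_pos : 0 < 1/κ := by positivity
  have hinv_le : 1/κ ≤ 1 := by rw [div_le_one hκ0]; linarith
  have hinv_lt : 1/κ < 1 := by rw [div_lt_one hκ0]; linarith
  have htwo_pow_lt : (2:ℝ)^(1/κ) < 2 := by
    calc (2:ℝ)^(1/κ) < 2^(1:ℝ) := Real.rpow_lt_rpow_of_exponent_lt one_lt_two hinv_lt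
      _ = 2 := Real.rpow_one 2
  have htwo_pow_ge : 1 ≤ (2:ℝ)^(1/κ) := by
    calc (1:ℝ) = 1^(1/κ) := (Real.one_rpow _).symm
      _ ≤ 2^(1/κ) := Real.rpow_le_rpow zero_le_one one_le_two hinv_pos.le
  have hpp : (2:ℝ)^(1/κ)*(2:ℝ)^(1/κ) < 4 := by
    have h1 : (1:ℝ) ≤ (2:ℝ)^(1/κ) := by
      calc (1:ℝ) = 1^(1/κ) := (Real.one_rpow _).symm
        _ ≤ 2^(1/κ) := Real.rpow_le_rpow zero_le_one one_le_two (by positivity)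
    have h2 : (2:ℝ)^(1/κ) < 2 := by
      calc (2:ℝ)^(1/κ) < 2^(1:ℝ) := Real.rpow_lt_rpow_of_exponent_lt one_lt_two
            (by rw [div_lt_one (by linarith)]; linarith)
        _ = 2 := Real.rpow_one 2
    nlinarith [h1, h2]
  have hfive_pow_le : (5:ℝ)^(1/κ) ≤ 5 := by
    calc (5:ℝ)^(1/κ) ≤ 5^(1:ℝ) := Real.rpow_le_rpow_of_exponent_le (by norm_num) hinv_le
      _ = 5 := Real.rpow_one 5
  refine ⟨16, by norm_num, ?_⟩
  intro C hC d hd U t hU ht R hR1 hRmono hRgap hRquad v₀ u₀ hv₀ hu₀lip hu₀eq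
    X hX0 hXinit hXderiv i hi hRi
  have hC1 : (1:ℝ) < C := by linarith
  have hU0 : (0:ℝ) ≤ U := by linarith
  have hU0' : (0:ℝ) < U := by linarith
  have hRle : ∀ a b : ℕ, 1 ≤ a → a ≤ b → R a ≤ R b := by
    intro a b ha hab
    induction b with
    | zero => omega
    | succ b ihb =>
      rcases eq_or_lt_of_le hab with h | h
      · rw [h]
      · have hab' : a ≤ b := by omega
        have hb1 : 1 ≤ b := le_trans ha hab'
        exact (ihb hab').trans (hRmono b hb1).le
  have hmax1 : (1:ℝ) ≤ max 1 (U*t) := le_max_left _ _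
  have hmax0 : (0:ℝ) < max 1 (U*t) := lt_of_lt_of_le one_pos hmax1
  have hb1 : (1:ℝ) ≤ 16*C*max 1 (U*t) := by nlinarith
  have hb0 : (0:ℝ) ≤ 16*C*max 1 (U*t) := by linarith
  have hexp_pos : (0:ℝ) < κ/(κ-1) := div_pos hκ0 hκ1
  have hr_lb : (1:ℝ) ≤ R (2*i) := by
    calc (1:ℝ) = 1^(κ/(κ-1)) := (Real.one_rpow _).symm
      _ ≤ (16*C*max 1 (U*t))^(κ/(κ-1)) := Real.rpow_le_rpow zero_le_one hb1 hexp_pos.le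
      _ ≤ R (2*i) := hRi
  have hr0 : (0:ℝ) < R (2*i) := by linarith
  have hrp_pos : (0:ℝ) < (R (2*i))^(1/κ) := Real.rpow_pos_of_pos hr0 _
  have hrp0 : (0:ℝ) ≤ (R (2*i))^(1/κ) := hrp_pos.le
  have hq : 4 * R (2*i) ≤ R (2*i+1) := hRquad i hi
  have hR'0 : (0:ℝ) < R (2*i+1) := by linarith
  have hR'p_pos : (0:ℝ) < (R (2*i+1))^(1/κ) := Real.rpow_pos_of_pos hR'0 _
  have hR'p0 : (0:ℝ) ≤ (R (2*i+1))^(1/κ) := hR'p_pos.le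
  have hEexp : (κ/(κ-1)) * ((κ-1)/κ) = 1 := by
    field_simp
  have hrpow : 16*C*max 1 (U*t) ≤ (R (2*i)) ^ ((κ-1)/κ) := by
    calc 16*C*max 1 (U*t) = (16*C*max 1 (U*t)) ^ ((κ/(κ-1)) * ((κ-1)/κ)) := by
          rw [hEexp, Real.rpow_one]
      _ = ((16*C*max 1 (U*t)) ^ (κ/(κ-1))) ^ ((κ-1)/κ) := Real.rpow_mul hb0 _ _
      _ ≤ (R (2*i)) ^ ((κ-1)/κ) := by
          apply Real.rpow_le_rpow (Real.rpow_nonneg hb0 _) hRi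
          positivity
  have hkey : ∀ a : ℝ, R (2*i) ≤ a → 16*C*max 1 (U*t) * a^(1/κ) ≤ a := by
    intro a ha
    have ha1 : (1:ℝ) ≤ a := hr_lb.trans ha
    have ha0 : (0:ℝ) < a := by linarith
    have h1 : (R (2*i))^((κ-1)/κ) ≤ a^((κ-1)/κ) := by
      apply Real.rpow_le_rpow hr0.le ha
      positivity
    have h2 : a^((κ-1)/κ) * a^(1/κ) = a := by
      rw [← Real.rpow_add ha0]
      rw [show (κ-1)/κ + 1/κ = 1 by field_simp; ring, Real.rpow_one]
    have h3 : (0:ℝ) ≤ a^(1/κ) := Real.rpow_nonneg ha0.le _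
    have h4 := mul_le_mul_of_nonneg_right (hrpow.trans h1) h3
    rw [h2] at h4
    exact h4
  have hone_le_pow : ∀ a : ℝ, 1 ≤ a → 1 ≤ a^(1/κ) := by
    intro a ha
    calc (1:ℝ) = 1^(1/κ) := (Real.one_rpow _).symm
      _ ≤ a^(1/κ) := Real.rpow_le_rpow zero_le_one ha hinv_pos.le
  -- interval monotonicity in τ
  have hIcc_mono : ∀ τ₁ τ₂ a : ℝ, 0 ≤ τ₁ → τ₁ ≤ τ₂ →
      R (2*i) + 4*(C-1)*U*τ₂*(R (2*i))^(1/κ) ≤ a →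
      a ≤ R (2*i+1) - 4*(C-1)*U*τ₂*(R (2*i+1))^(1/κ) →
      R (2*i) + 4*(C-1)*U*τ₁*(R (2*i))^(1/κ) ≤ a ∧
      a ≤ R (2*i+1) - 4*(C-1)*U*τ₁*(R (2*i+1))^(1/κ) := by
    intro τ₁ τ₂ a h0 h12 hlo hhi
    have hA0 : (0:ℝ) ≤ 4*(C-1)*U := mul_nonneg (mul_nonneg (by norm_num) (by linarith)) hU0
    have k1 : 0 ≤ 4*(C-1)*U*(τ₂-τ₁)*(R (2*i))^(1/κ) :=
      mul_nonneg (mul_nonneg hA0 (by linarith)) hrp0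
    have k2 : 0 ≤ 4*(C-1)*U*(τ₂-τ₁)*(R (2*i+1))^(1/κ) :=
      mul_nonneg (mul_nonneg hA0 (by linarith)) hR'p0
    constructor
    · linarith [k1, hlo]
    · linarith [k2, hhi]
  intro m
  induction m with
  | zero =>
    intro t' ht' x hx s hs
    have h := hX0 t' s x
    rw [h]
    obtain ⟨hx1, hx2⟩ := hx
    have hmem := hIcc_mono (t'-s) t' ‖x‖ (by linarith [hs.1, hs.2]) (by linarith [hs.1]) hx1 hx2
    refine ⟨⟨hmem.1, hmem.2⟩, by linarith [norm_nonneg x], by linarith [norm_nonneg x], ?_⟩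
    simp only [sub_self, norm_zero]
    have h2p : (0:ℝ) ≤ (2:ℝ)^(1/κ) := by linarith
    have hxp : (0:ℝ) ≤ ‖x‖^(1/κ) := Real.rpow_nonneg (norm_nonneg x) _
    apply mul_nonneg _ hxp
    apply mul_nonneg _ ht'.1
    apply mul_nonneg _ hU0
    apply mul_nonneg h2p
    linarith
  | succ m ih =>
    intro t' ht' x hx s hs
    obtain ⟨ht'0, ht't⟩ := ht'
    obtain ⟨hx1, hx2⟩ := hx
    have hA0 : (0:ℝ) ≤ 4*(C-1)*U := mul_nonneg (mul_nonneg (by norm_num) (by linarith)) hU0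
    have hxr : R (2*i) ≤ ‖x‖ := by
      have h := mul_nonneg (mul_nonneg hA0 ht'0) hrp0
      linarith only [hx1, h]
    have hxR' : ‖x‖ ≤ R (2*i+1) := by
      have h := mul_nonneg (mul_nonneg hA0 ht'0) hR'p0
      linarith only [hx2, h]
    have hx1' : (1:ℝ) ≤ ‖x‖ := hr_lb.trans hxr
    have hxp1 : (1:ℝ) ≤ ‖x‖^(1/κ) := hone_le_pow _ hx1'
    have hxp0 : (0:ℝ) ≤ ‖x‖^(1/κ) := by linarith only [hxp1]
    have hM5 : (5:ℝ) ≤ 5*U*‖x‖^(1/κ) := by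
      have h := mul_le_mul hU hxp1 zero_le_one hU0
      linarith only [h]
    have hM0 : (0:ℝ) < 5*U*‖x‖^(1/κ) := by linarith only [hM5]
    -- the key smallness bound:  10 U t' ‖x‖^{1/κ} ≤ ‖x‖/16
    have hBx : 10*U*t'*‖x‖^(1/κ) ≤ ‖x‖/16 := by
      have h1 := hkey ‖x‖ hxr
      have h2 : U*t' ≤ max 1 (U*t) :=
        le_trans (mul_le_mul_of_nonneg_left ht't hU0) (le_max_right _ _)
      have h3 : 0 ≤ (C-16) * (max 1 (U*t) * ‖x‖^(1/κ)) :=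
        mul_nonneg (by linarith only [hC]) (mul_nonneg hmax0.le hxp0)
      have h4 : 0 ≤ (max 1 (U*t) - U*t') * ‖x‖^(1/κ) :=
        mul_nonneg (by linarith only [h2]) hxp0
      linarith only [h1, h3, h4, norm_nonneg x]
    -- membership in the safe interval follows from the bootstrap bound
    have hmem : ∀ σ, 0 ≤ σ → σ ≤ t' → ‖X (m+1) t' σ x - x‖ ≤ 2*(5*U*‖x‖^(1/κ))*σ →
        R (2*i) + 4*(C-1)*U*(t'-σ)*(R (2*i))^(1/κ) ≤ ‖X (m+1) t' σ x‖ ∧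
        ‖X (m+1) t' σ x‖ ≤ R (2*i+1) - 4*(C-1)*U*(t'-σ)*(R (2*i+1))^(1/κ) := by
      intro σ hσ0 hσt' hg
      have habs := abs_le.mp (abs_norm_sub_norm_le (X (m+1) t' σ x) x)
      have hxpR' : ‖x‖^(1/κ) ≤ (R (2*i+1))^(1/κ) :=
        Real.rpow_le_rpow (norm_nonneg x) hxR' hinv_pos.le
      constructor
      · by_cases hc : ‖x‖ ≤ 2*R (2*i)
        · have hxp2 : ‖x‖^(1/κ) ≤ 2*(R (2*i))^(1/κ) := by
            calc ‖x‖^(1/κ) ≤ (2*R (2*i))^(1/κ) :=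
                  Real.rpow_le_rpow (norm_nonneg _) hc hinv_pos.le
              _ = 2^(1/κ)*(R (2*i))^(1/κ) := Real.mul_rpow (by norm_num) hr0.le
              _ ≤ 2*(R (2*i))^(1/κ) := mul_le_mul_of_nonneg_right htwo_pow_lt.le hrp0
          have k3 : 0 ≤ (4*(C-1)-20)*(U*σ*(R (2*i))^(1/κ)) :=
            mul_nonneg (by linarith only [hC]) (mul_nonneg (mul_nonneg hU0 hσ0) hrp0)
          have k4 : 0 ≤ 10*(U*σ)*(2*(R (2*i))^(1/κ) - ‖x‖^(1/κ)) :=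
            mul_nonneg (mul_nonneg (by norm_num) (mul_nonneg hU0 hσ0))
              (by linarith only [hxp2])
          linarith only [hx1, hg, habs.1, k3, k4]
        · have h5 := hkey (R (2*i)) (le_refl _)
          have h2 : U*(t'-σ) ≤ max 1 (U*t) :=
            le_trans (mul_le_mul_of_nonneg_left (by linarith only [ht't, hσ0]) hU0)
              (le_max_right _ _)
          have k5 : 0 ≤ (C-1) * ((max 1 (U*t) - U*(t'-σ)) * (R (2*i))^(1/κ)) :=
            mul_nonneg (by linarith only [hC1]) (mul_nonneg (by linarith only [h2]) hrp0)
          have k6 : 0 ≤ max 1 (U*t) * (R (2*i))^(1/κ) := mul_nonneg hmax0.le hrp0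
          have h6 : 4*(C-1)*U*(t'-σ)*(R (2*i))^(1/κ) ≤ R (2*i)/4 := by
            linarith only [h5, k5, k6]
          have k8 : 0 ≤ 10*U*(t'-σ)*‖x‖^(1/κ) :=
            mul_nonneg (mul_nonneg (mul_nonneg (by norm_num) hU0)
              (by linarith only [hσt'])) hxp0
          have hc' : 2*R (2*i) < ‖x‖ := not_le.mp hc
          linarith only [hBx, h6, hg, habs.1, k8, hc', norm_nonneg x]
      · have k1 : 0 ≤ 4*(C-1)*(U*σ)*((R (2*i+1))^(1/κ) - ‖x‖^(1/κ)) :=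
          mul_nonneg (mul_nonneg (mul_nonneg (by norm_num) (by linarith only [hC1]))
            (mul_nonneg hU0 hσ0)) (by linarith only [hxpR'])
        have k2 : 0 ≤ (4*(C-1) - 10)*(U*σ*‖x‖^(1/κ)) :=
          mul_nonneg (by linarith only [hC]) (mul_nonneg (mul_nonneg hU0 hσ0) hxp0)
        linarith only [hx2, hg, habs.2, k1, k2]
    -- the speed bound
    have hspeed : ∀ σ, 0 ≤ σ → σ < t' → ‖X (m+1) t' σ x - x‖ ≤ 2*(5*U*‖x‖^(1/κ))*σ →
        ‖u₀ (X m (t'-σ) (t'-σ) (X (m+1) t' σ x))‖ ≤ 5*U*‖x‖^(1/κ) := by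
      intro σ hσ0 hσt' hg
      have hm' := hmem σ hσ0 hσt'.le hg
      have ht''0 : 0 < t' - σ := by linarith only [hσt']
      have ht''t : t' - σ ≤ t := by linarith only [hσ0, ht't]
      have hy := ih (t'-σ) ⟨ht''0.le, ht''t⟩ (X (m+1) t' σ x) ⟨hm'.1, hm'.2⟩
        (t'-σ) ⟨ht''0.le, le_refl _⟩
      obtain ⟨hz1, hz2, hz3, hz4⟩ := hy
      have hy_lb := hm'.1
      have hy_ub := hm'.2
      have hyR' : ‖X (m+1) t' σ x‖ ≤ R (2*i+1) := by
        have h := mul_nonneg (mul_nonneg hA0 ht''0.le) hR'p0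
        linarith only [hy_ub, h]
      have e0 : (0:ℝ) < (C-1)*U*(t'-σ) :=
        mul_pos (mul_pos (by linarith only [hC1]) hU0') ht''0
      have hQrp : (0:ℝ) < (C-1)*U*(t'-σ)*(R (2*i))^(1/κ) := mul_pos e0 hrp_pos
      have hQR'p : (0:ℝ) < (C-1)*U*(t'-σ)*(R (2*i+1))^(1/κ) := mul_pos e0 hR'p_pos
      have habsz := abs_le.mp (abs_norm_sub_norm_le
        (X m (t'-σ) (t'-σ) (X (m+1) t' σ x)) (X (m+1) t' σ x))
      -- strict avoidance of the dangerous annuli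
      have hzr : R (2*i) < ‖X m (t'-σ) (t'-σ) (X (m+1) t' σ x)‖ := by
        by_cases hy2 : ‖X (m+1) t' σ x‖ ≤ 2*R (2*i)
        · have hyp2 : ‖X (m+1) t' σ x‖^(1/κ) ≤ 2^(1/κ)*(R (2*i))^(1/κ) := by
            calc ‖X (m+1) t' σ x‖^(1/κ) ≤ (2*R (2*i))^(1/κ) :=
                  Real.rpow_le_rpow (norm_nonneg _) hy2 hinv_pos.le
              _ = 2^(1/κ)*(R (2*i))^(1/κ) := Real.mul_rpow (by norm_num) hr0.le
          have hc0 : 0 ≤ 2^(1/κ)*(C-1)*U*(t'-σ) :=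
            mul_nonneg (mul_nonneg (mul_nonneg (by linarith only [htwo_pow_ge])
              (by linarith only [hC1])) hU0) ht''0.le
          have e1 : ‖X m (t'-σ) (t'-σ) (X (m+1) t' σ x) - X (m+1) t' σ x‖ ≤
              2^(1/κ)*(C-1)*U*(t'-σ)*(2^(1/κ)*(R (2*i))^(1/κ)) :=
            le_trans hz4 (mul_le_mul_of_nonneg_left hyp2 hc0)
          have e2 : (0:ℝ) < (4 - 2^(1/κ)*2^(1/κ)) * ((C-1)*U*(t'-σ)*(R (2*i))^(1/κ)) :=
            mul_pos (by linarith only [hpp]) hQrp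
          linarith only [habsz.1, hy_lb, e1, e2]
        · linarith only [hz2, not_le.mp hy2, hr0]
      have hzR' : ‖X m (t'-σ) (t'-σ) (X (m+1) t' σ x)‖ < R (2*i+1) := by
        have hypR' : ‖X (m+1) t' σ x‖^(1/κ) ≤ (R (2*i+1))^(1/κ) :=
          Real.rpow_le_rpow (norm_nonneg _) hyR' hinv_pos.le
        have q1 : 0 ≤ (2 - 2^(1/κ)) * ((C-1)*U*(t'-σ)*‖X (m+1) t' σ x‖^(1/κ)) :=
          mul_nonneg (by linarith only [htwo_pow_lt])
            (mul_nonneg e0.le (Real.rpow_nonneg (norm_nonneg _) _))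
        have q2 : 0 ≤ 2*((C-1)*U*(t'-σ)) * ((R (2*i+1))^(1/κ) - ‖X (m+1) t' σ x‖^(1/κ)) :=
          mul_nonneg (by linarith only [e0]) (by linarith only [hypR'])
        linarith only [habsz.2, hy_ub, hz4, q1, q2, hQR'p]
      have hzout : ∀ j : ℕ, 1 ≤ j →
          ‖X m (t'-σ) (t'-σ) (X (m+1) t' σ x)‖ ∉ Set.Icc (R (2*j-1)) (R (2*j)) := by
        intro j hj hmem'
        rcases le_or_gt j i with hji | hij
        · have h := hRle (2*j) (2*i) (by omega) (by omega)
          linarith only [hmem'.2, h, hzr]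
        · have h := hRle (2*i+1) (2*j-1) (by omega) (by omega)
          linarith only [hmem'.1, h, hzR']
      rw [hu₀eq _ hzout]
      have hz4x : ‖X m (t'-σ) (t'-σ) (X (m+1) t' σ x)‖ ≤ 4*‖x‖ := by
        have habsy := abs_le.mp (abs_norm_sub_norm_le (X (m+1) t' σ x) x)
        have h9 : 0 ≤ 10*U*(t'-σ)*‖x‖^(1/κ) :=
          mul_nonneg (mul_nonneg (mul_nonneg (by norm_num) hU0)
            (by linarith only [hσt'])) hxp0
        linarith only [hz3, habsy.2, hg, hBx, h9, norm_nonneg x]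
      calc ‖v₀ (X m (t'-σ) (t'-σ) (X (m+1) t' σ x))‖
          ≤ U * (1+‖X m (t'-σ) (t'-σ) (X (m+1) t' σ x)‖)^(1/κ) := hv₀ _
        _ ≤ U * (5*‖x‖)^(1/κ) := by
            have hz0 : (0:ℝ) ≤ ‖X m (t'-σ) (t'-σ) (X (m+1) t' σ x)‖ := norm_nonneg _
            apply mul_le_mul_of_nonneg_left _ hU0
            exact Real.rpow_le_rpow (by linarith only [hz0])
              (by linarith only [hz4x, hx1']) hinv_pos.le
        _ ≤ 5*U*‖x‖^(1/κ) := by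
            rw [Real.mul_rpow (by norm_num) (norm_nonneg x)]
            have h5p : 0 ≤ (5 - 5^(1/κ))*(U*‖x‖^(1/κ)) :=
              mul_nonneg (by linarith only [hfive_pow_le]) (mul_nonneg hU0 hxp0)
            linarith only [h5p]
    -- the bootstrap
    have h0S : (0:ℝ) ∈ {σ : ℝ | σ ∈ Set.Icc (0:ℝ) t' ∧ ∀ τ ∈ Set.Icc (0:ℝ) σ,
        ‖X (m+1) t' τ x - x‖ ≤ 2*(5*U*‖x‖^(1/κ))*τ} := by
      refine ⟨⟨le_refl 0, ht'0⟩, ?_⟩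
      intro τ hτ
      have hτ0 : τ = 0 := le_antisymm hτ.2 hτ.1
      subst hτ0
      rw [hXinit]
      simp
    set S : Set ℝ := {σ : ℝ | σ ∈ Set.Icc (0:ℝ) t' ∧ ∀ τ ∈ Set.Icc (0:ℝ) σ,
        ‖X (m+1) t' τ x - x‖ ≤ 2*(5*U*‖x‖^(1/κ))*τ} with hSdef
    have hSne : S.Nonempty := ⟨0, h0S⟩
    have hSbdd : BddAbove S := ⟨t', fun σ hσ => hσ.1.2⟩
    have hT0 : 0 ≤ sSup S := le_csSup hSbdd h0S
    have hTt' : sSup S ≤ t' := csSup_le hSne (fun σ hσ => hσ.1.2)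
    have hall : ∀ τ, 0 ≤ τ → τ < sSup S →
        ‖X (m+1) t' τ x - x‖ ≤ 2*(5*U*‖x‖^(1/κ))*τ := by
      intro τ h0 hlt
      obtain ⟨σ', hσ'S, hlt'⟩ := exists_lt_of_lt_csSup hSne hlt
      exact hσ'S.2 τ ⟨h0, hlt'.le⟩
    have hTS : sSup S ∈ S := by
      refine ⟨⟨hT0, hTt'⟩, ?_⟩
      intro τ hτ
      rcases lt_or_eq_of_le hτ.2 with h | h
      · exact hall τ hτ.1 h
      · subst h
        rcases eq_or_lt_of_le hτ.1 with h0 | h0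
        · rw [← h0, hXinit]
          simp
        · have hcont : ContinuousAt (fun σ => ‖X (m+1) t' σ x - x‖) (sSup S) := by
            have hD := hXderiv m t' ⟨ht'0, ht't⟩ x (sSup S) ⟨hT0, hTt'⟩
            exact (hD.continuousAt.sub continuousAt_const).norm
          have ht1 : Filter.Tendsto (fun σ => ‖X (m+1) t' σ x - x‖)
              (nhdsWithin (sSup S) (Set.Iio (sSup S)))
              (nhds (‖X (m+1) t' (sSup S) x - x‖)) :=
            hcont.tendsto.mono_left nhdsWithin_le_nhds
          have ht2 : Filter.Tendsto (fun σ : ℝ => 2*(5*U*‖x‖^(1/κ))*σ)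
              (nhdsWithin (sSup S) (Set.Iio (sSup S)))
              (nhds (2*(5*U*‖x‖^(1/κ))*(sSup S))) :=
            ((continuous_const.mul continuous_id).tendsto (sSup S)).mono_left
              nhdsWithin_le_nhds
          refine le_of_tendsto_of_tendsto ht1 ht2 ?_
          filter_upwards [Ioo_mem_nhdsLT_of_mem (Set.mem_Ioc.mpr ⟨h0, le_refl _⟩)] with σ hσ
          exact hall σ hσ.1.le hσ.2
    have hTeq : sSup S = t' := by
      by_contra hne'
      have hTlt : sSup S < t' := lt_of_le_of_ne hTt' hne'
      have hgT : ‖X (m+1) t' (sSup S) x - x‖ ≤ (5*U*‖x‖^(1/κ)) * sSup S := by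
        have hmv := Convex.norm_image_sub_le_of_norm_hasDerivWithin_le
          (f := fun σ => X (m+1) t' σ x)
          (f' := fun σ => u₀ (X m (t'-σ) (t'-σ) (X (m+1) t' σ x)))
          (fun σ hσ => (hXderiv m t' ⟨ht'0, ht't⟩ x σ
            ⟨hσ.1, le_trans hσ.2 hTt'⟩).hasDerivWithinAt)
          (fun σ hσ => hspeed σ hσ.1 (lt_of_le_of_lt hσ.2 hTlt) (hTS.2 σ hσ))
          (convex_Icc 0 (sSup S)) (Set.left_mem_Icc.mpr hT0) (Set.right_mem_Icc.mpr hT0)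
        simp only [hXinit, sub_zero, Real.norm_eq_abs, abs_of_nonneg hT0] at hmv
        exact hmv
      have hDT := hXderiv m t' ⟨ht'0, ht't⟩ x (sSup S) ⟨hT0, hTt'⟩
      have hDM : ‖u₀ (X m (t'-sSup S) (t'-sSup S) (X (m+1) t' (sSup S) x))‖
          ≤ 5*U*‖x‖^(1/κ) :=
        hspeed (sSup S) hT0 hTlt (hTS.2 (sSup S) ⟨hT0, le_refl _⟩)
      rw [hasDerivAt_iff_isLittleO] at hDT
      have hev := hDT.def hM0
      obtain ⟨δ, hδ0, hδ⟩ := Metric.eventually_nhds_iff.mp hev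
      have hs₁T : sSup S < min (sSup S + δ/2) t' :=
        lt_min (by linarith only [hδ0]) hTlt
      have hs₁S : min (sSup S + δ/2) t' ∈ S := by
        refine ⟨⟨le_min (by linarith only [hT0, hδ0]) ht'0, min_le_right _ _⟩, ?_⟩
        intro τ hτ
        rcases le_or_gt τ (sSup S) with h | h
        · exact hTS.2 τ ⟨hτ.1, h⟩
        · have hτδ : dist τ (sSup S) < δ := by
            rw [Real.dist_eq, abs_of_pos (by linarith only [h])]
            have h7 : τ ≤ sSup S + δ/2 := le_trans hτ.2 (min_le_left _ _)
            linarith only [h7, hδ0]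
          have hb : ‖X (m+1) t' τ x - X (m+1) t' (sSup S) x -
              (τ - sSup S) • u₀ (X m (t'-sSup S) (t'-sSup S) (X (m+1) t' (sSup S) x))‖ ≤
              5*U*‖x‖^(1/κ) * ‖τ - sSup S‖ := hδ hτδ
          have h5 : ‖(τ - sSup S) • u₀ (X m (t'-sSup S) (t'-sSup S) (X (m+1) t' (sSup S) x))‖
              = (τ - sSup S) * ‖u₀ (X m (t'-sSup S) (t'-sSup S) (X (m+1) t' (sSup S) x))‖ := by
            rw [norm_smul, Real.norm_eq_abs, abs_of_pos (by linarith only [h])]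
          have hnτ : ‖τ - sSup S‖ = τ - sSup S := by
            rw [Real.norm_eq_abs, abs_of_pos (by linarith only [h])]
          have h3 : ‖X (m+1) t' τ x - X (m+1) t' (sSup S) x‖ ≤
              2*(5*U*‖x‖^(1/κ))*(τ - sSup S) := by
            have htri : ‖X (m+1) t' τ x - X (m+1) t' (sSup S) x‖ ≤
                ‖X (m+1) t' τ x - X (m+1) t' (sSup S) x -
                  (τ - sSup S) • u₀ (X m (t'-sSup S) (t'-sSup S) (X (m+1) t' (sSup S) x))‖ +
                ‖(τ - sSup S) • u₀ (X m (t'-sSup S) (t'-sSup S) (X (m+1) t' (sSup S) x))‖ := by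
              have h8 := norm_add_le (X (m+1) t' τ x - X (m+1) t' (sSup S) x -
                  (τ - sSup S) • u₀ (X m (t'-sSup S) (t'-sSup S) (X (m+1) t' (sSup S) x)))
                ((τ - sSup S) • u₀ (X m (t'-sSup S) (t'-sSup S) (X (m+1) t' (sSup S) x)))
              simpa using h8
            have h6 : (τ - sSup S) *
                ‖u₀ (X m (t'-sSup S) (t'-sSup S) (X (m+1) t' (sSup S) x))‖ ≤
                (τ - sSup S) * (5*U*‖x‖^(1/κ)) :=
              mul_le_mul_of_nonneg_left hDM (by linarith only [h])
            rw [hnτ] at hb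
            rw [h5] at htri
            linarith only [htri, hb, h6]
          have htri2 := norm_sub_le_norm_sub_add_norm_sub (X (m+1) t' τ x)
            (X (m+1) t' (sSup S) x) x
          have hMT : 0 ≤ (5*U*‖x‖^(1/κ)) * sSup S := mul_nonneg hM0.le hT0
          linarith only [h3, hgT, htri2, hMT]
      have := le_csSup hSbdd hs₁S
      linarith only [this, hs₁T]
    have hInv : ∀ τ ∈ Set.Icc (0:ℝ) t', ‖X (m+1) t' τ x - x‖ ≤ 2*(5*U*‖x‖^(1/κ))*τ := by
      intro τ hτ
      exact hTS.2 τ (by rw [hTeq]; exact hτ)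
    -- conclusions
    have hgs := hInv s hs
    have h9 : 2*(5*U*‖x‖^(1/κ))*s ≤ 10*U*t'*‖x‖^(1/κ) := by
      have h := mul_nonneg (mul_nonneg (mul_nonneg (by norm_num : (0:ℝ) ≤ 10) hU0)
        (by linarith only [hs.2] : (0:ℝ) ≤ t' - s)) hxp0
      linarith only [h]
    have hgs16 : ‖X (m+1) t' s x - x‖ ≤ ‖x‖/16 := by
      linarith only [hgs, h9, hBx]
    have habs := abs_le.mp (abs_norm_sub_norm_le (X (m+1) t' s x) x)
    have hmemf := hmem s hs.1 hs.2 hgs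
    refine ⟨⟨hmemf.1, hmemf.2⟩, by linarith only [habs.1, hgs16, norm_nonneg x],
      by linarith only [habs.2, hgs16, norm_nonneg x], ?_⟩
    have h10 : 0 ≤ (2^(1/κ) - 1) * ((C-1)*U*t'*‖x‖^(1/κ)) :=
      mul_nonneg (by linarith only [htwo_pow_ge]) (mul_nonneg (mul_nonneg (mul_nonneg
        (by linarith only [hC1]) hU0) ht'0) hxp0)
    have h11 : 0 ≤ (C - 1 - 10) * (U*t'*‖x‖^(1/κ)) :=
      mul_nonneg (by linarith only [hC]) (mul_nonneg (mul_nonneg hU0 ht'0) hxp0)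
    linarith only [hgs, h9, h10, h11]
end
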